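/- arXiv:1606.09333 — 9 statements merged into one kernel-verified Lean document; each statement's English description precedes it below -/
import Mathlib

section
/- For all real x > 1, (√x - 1)/(√x + 1) ≥ exp(-2/√(x-1)). -/
/-!
Put `t = 1/√(x-1)`, so that `√(1+t²) = √x/√(x-1)`. Since `arsinh t ≤ t` for `t ≥ 0`,
`exp(-t) ≤ exp(arsinh(-t)) = √(1+t²) - t = (√x - 1)/√(x-1)`, and squaring gives the claim because
`(√x - 1)²/(x - 1) = (√x - 1)/(√x + 1)`.
-/

open Real

lemma Real.arsinh_le_self {t : ℝ} (ht : 0 ≤ t) : arsinh t ≤ t := by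
  simpa only [arsinh_sinh] using arsinh_le_arsinh.mpr (self_le_sinh_iff.mpr ht)

lemma Real.exp_neg_le_sqrt_one_add_sq_sub {t : ℝ} (ht : 0 ≤ t) : exp (-t) ≤ √(1 + t ^ 2) - t := by
  calc exp (-t) ≤ exp (arsinh (-t)) := by
        rw [exp_le_exp, arsinh_neg, neg_le_neg_iff]
        exact arsinh_le_self ht
    _ = √(1 + t ^ 2) - t := by rw [exp_arsinh, neg_sq, neg_add_eq_sub]

lemma Real.sq_sqrt_sub_one_div_sqrt_sub_one {x : ℝ} (hx : 1 < x) :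
    ((√x - 1) / √(x - 1)) ^ 2 = (√x - 1) / (√x + 1) := by
  have hsub : x - 1 = (√x - 1) * (√x + 1) := by
    linear_combination -(sq_sqrt (by linarith : (0:ℝ) ≤ x))
  have hs : 1 < √x := by rwa [lt_sqrt zero_le_one, one_pow]
  rw [div_pow, sq_sqrt (by linarith), hsub]
  field_simp [show √x - 1 ≠ 0 by linarith, show √x + 1 ≠ 0 by linarith]

theorem stmt_4 (x : ℝ) (hx : 1 < x) :
    (Real.sqrt x - 1) / (Real.sqrt x + 1) ≥ Real.exp (-2 / Real.sqrt (x - 1)) := by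
  set w := √(x - 1)
  have hw : 0 < w := sqrt_pos.mpr (by linarith)
  have hsqrt : √(1 + (1 / w) ^ 2) = √x / w := by
    rw [← sqrt_sq (by positivity : 0 ≤ √x / w), div_pow, div_pow, sq_sqrt (by linarith),
      sq_sqrt (by linarith)]
    congr 1
    field_simp [show x - 1 ≠ 0 by linarith]
    ring
  calc exp (-2 / w) = exp (-(1 / w)) ^ 2 := by rw [← exp_nat_mul]; ring_nf
    _ ≤ (√(1 + (1 / w) ^ 2) - 1 / w) ^ 2 :=
        pow_le_pow_left₀ (exp_pos _).le (exp_neg_le_sqrt_one_add_sq_sub (by positivity)) 2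
    _ = ((√x - 1) / w) ^ 2 := by rw [hsqrt, sub_div]
    _ = (√x - 1) / (√x + 1) := sq_sqrt_sub_one_div_sqrt_sub_one hx
end

section
/- The function δ(x) = ln((√x - 1)/(√x + 1)) + 2/√(x-1) is nonnegative for all x > 1. -/
/-!
With `t = √x`, `a = t + 1` and `b = t - 1` we have `a - b = 2` and `a * b = x - 1`, so the claim
is `log (a / b) ≤ (a - b) / √(a * b)`: the logarithmic mean of `a` and `b` dominates their
geometric mean. Putting `u = √(a / b)`, this is `log u ≤ sinh (log u) = (u - u⁻¹) / 2`.
-/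

open Real

theorem Real.two_mul_log_le_sub_inv {u : ℝ} (hu : 1 ≤ u) : 2 * log u ≤ u - u⁻¹ := by
  have h : log u ≤ sinh (log u) := self_le_sinh_iff.2 (log_nonneg hu)
  rw [sinh_log (by linarith)] at h
  linarith

theorem Real.log_div_le_sub_div_sqrt_mul {a b : ℝ} (hb : 0 < b) (hba : b ≤ a) :
    log (a / b) ≤ (a - b) / √(a * b) := by
  obtain ⟨p, hp, rfl⟩ : ∃ p, 0 < p ∧ p ^ 2 = a :=
    ⟨√a, sqrt_pos.2 (hb.trans_le hba), sq_sqrt (by linarith)⟩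
  obtain ⟨q, hq, rfl⟩ : ∃ q, 0 < q ∧ q ^ 2 = b := ⟨√b, by positivity, sq_sqrt hb.le⟩
  have hqp : 1 ≤ p / q :=
    (one_le_div hq).2 (pow_le_pow_iff_left₀ hq.le hp.le two_ne_zero |>.1 hba)
  calc log (p ^ 2 / q ^ 2)
      = 2 * log (p / q) := by rw [← div_pow, log_pow]; norm_num
    _ ≤ p / q - (p / q)⁻¹ := two_mul_log_le_sub_inv hqp
    _ = (p ^ 2 - q ^ 2) / √(p ^ 2 * q ^ 2) := by
      rw [← mul_pow, sqrt_sq (by positivity)]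
      field_simp

theorem stmt_5 (x : ℝ) (hx : 1 < x) :
    0 ≤ Real.log ((Real.sqrt x - 1) / (Real.sqrt x + 1)) + 2 / Real.sqrt (x - 1) := by
  set t := √x
  have ht : 1 < t := by simpa using sqrt_lt_sqrt zero_le_one hx
  have hmul : (t + 1) * (t - 1) = x - 1 := by nlinarith [sq_sqrt (by linarith : (0 : ℝ) ≤ x)]
  have key := log_div_le_sub_div_sqrt_mul (a := t + 1) (b := t - 1) (by linarith) (by linarith)
  rw [hmul, show t + 1 - (t - 1) = 2 by ring] at key
  rw [← inv_div, log_inv]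
  linarith
end

section
/- Let L > μ > 0, c > 0, α ≥ 0, ε > 0, and let k be a nonnegative real number. If ε ≥ c·((√((L+α)/(μ+α)) - 1)/(√((L+α)/(μ+α)) + 1))^k, then k ≥ (1/2)·√((L+α)/(μ+α) - 1)·(ln c + ln(1/ε)). -/
lemma aux_two_log_le (w : ℝ) (hw : 1 ≤ w) : 2 * Real.log w ≤ w - 1 / w := by
  have hw0 : 0 < w := by linarith
  have hx : 0 ≤ Real.log w := Real.log_nonneg hw
  have hs : Real.log w ≤ Real.sinh (Real.log w) := Real.self_le_sinh_iff.2 hx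
  have : Real.sinh (Real.log w) = (w - 1 / w) / 2 := by
    rw [Real.sinh_eq, Real.exp_log hw0, Real.exp_neg, Real.exp_log hw0, one_div]
  linarith [this ▸ hs]

lemma aux_final (k D B A : ℝ) (hk : 0 ≤ k) (hB : 0 < B) (hD : 0 < D)
    (hkey : D * B ≤ 2) (hstep : A ≤ k * D) : 1 / 2 * B * A ≤ k := by
  rcases le_or_gt A 0 with hA | hA
  · nlinarith
  · nlinarith [mul_le_mul_of_nonneg_right hkey (le_of_lt hA),
      mul_le_mul_of_nonneg_right hstep (le_of_lt hB)]

theorem stmt_6 (L μ c α ε k : ℝ) (hμ : 0 < μ) (hL : μ < L) (hc : 0 < c)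
    (hα : 0 ≤ α) (hε : 0 < ε) (hk : 0 ≤ k)
    (h : ε ≥ c * ((Real.sqrt ((L + α) / (μ + α)) - 1) /
          (Real.sqrt ((L + α) / (μ + α)) + 1)) ^ k) :
    k ≥ (1 / 2) * Real.sqrt ((L + α) / (μ + α) - 1) * (Real.log c + Real.log (1 / ε)) := by
  set Q : ℝ := (L + α) / (μ + α) with hQdef
  have hμα : 0 < μ + α := by linarith
  have hQ1 : 1 < Q := by
    rw [hQdef, lt_div_iff₀ hμα]; linarith
  have hQ0 : 0 ≤ Q := by linarith
  set s : ℝ := Real.sqrt Q with hsdef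
  have hs2 : s ^ 2 = Q := Real.sq_sqrt hQ0
  have hs0 : 0 ≤ s := Real.sqrt_nonneg Q
  have hs1 : 1 < s := by nlinarith
  have hsm : 0 < s - 1 := by linarith
  have hsp : 0 < s + 1 := by linarith
  -- r and its properties
  set r : ℝ := (s - 1) / (s + 1) with hrdef
  have hr0 : 0 < r := div_pos hsm hsp
  -- w
  set w : ℝ := Real.sqrt ((s + 1) / (s - 1)) with hwdef
  have hw0 : 0 ≤ w := Real.sqrt_nonneg _
  have hw2 : w ^ 2 = (s + 1) / (s - 1) := Real.sq_sqrt (le_of_lt (div_pos hsp hsm))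
  have hq1 : 1 ≤ (s + 1) / (s - 1) := (one_le_div hsm).2 (by linarith)
  have hw1 : 1 ≤ w := by nlinarith
  have hwpos : 0 < w := by linarith
  -- B = sqrt (Q - 1) = w * (s - 1)
  have hB : Real.sqrt (Q - 1) = w * (s - 1) := by
    have h1 : Q - 1 = (w * (s - 1)) ^ 2 := by
      have : (w * (s - 1)) ^ 2 = w ^ 2 * (s - 1) ^ 2 := by ring
      rw [this, hw2]
      field_simp
      nlinarith
    rw [h1, Real.sqrt_sq (by positivity)]
  set B : ℝ := Real.sqrt (Q - 1) with hBdef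
  have hBpos : 0 < B := by rw [hB]; positivity
  -- D = log((s+1)/(s-1)) = 2 log w
  have hlogw : 2 * Real.log w = Real.log ((s + 1) / (s - 1)) := by
    rw [hwdef, Real.log_sqrt (le_trans zero_le_one hq1)]; ring
  set D : ℝ := Real.log ((s + 1) / (s - 1)) with hDdef
  have hDr : Real.log r = -D := by
    rw [hrdef, hDdef, Real.log_div (by linarith) (by linarith),
      Real.log_div (by linarith) (by linarith)]
    ring
  -- key: D * B ≤ 2
  have hkey : D * B ≤ 2 := by
    have h1 : 2 * Real.log w ≤ w - 1 / w := aux_two_log_le w hw1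
    have h2 : (w - 1 / w) * B = 2 := by
      rw [hB]
      have : (w - 1 / w) * (w * (s - 1)) = (w ^ 2 - 1) * (s - 1) := by
        field_simp
      rw [this, hw2]
      field_simp
      norm_num
    nlinarith [hlogw]
  -- from hypothesis: k * D ≥ log c - log ε
  have hstep : Real.log c - Real.log ε ≤ k * D := by
    have hrk : (0:ℝ) < r ^ k := Real.rpow_pos_of_pos hr0 k
    have h' : c * r ^ k ≤ ε := h
    have h3 : Real.log (c * r ^ k) ≤ Real.log ε :=
      Real.log_le_log (by positivity) h'
    rw [Real.log_mul (ne_of_gt hc) (ne_of_gt hrk), Real.log_rpow hr0, hDr] at h3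
    linarith
  clear_value Q s r w B D
  have hD0 : 0 < D := hDdef ▸ Real.log_pos ((one_lt_div hsm).2 (by linarith))
  have hfin := aux_final k D B (Real.log c - Real.log ε) hk hBpos hD0 hkey hstep
  have hinv : Real.log (1 / ε) = -Real.log ε := by rw [one_div, Real.log_inv]
  rw [ge_iff_le, hinv]
  linarith
end

section
/- Let U_k be the k-th Chebyshev polynomial of the second kind, i.e., U_k(cos θ) = sin((k+1)θ)/sin θ. For every polynomial p of degree at most k-1, ∫_{-1}^{1} p(η)·sgn(U_k(η)) dη = 0. -/
/-!
The points `node (k + 1) j = cos (j π / (k + 1))` cut `[-1, 1]` into `k + 1` pieces on which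
`sgn U_k = (-1) ^ j`, so the integral equals the alternating sum of `∫ p` over the pieces. This is
linear in `p`, and the `U_m` with `m < k` span the polynomials of degree `< k`. For `p = U_m` the
pieces contribute differences of `T_{m+1} / (m + 1)` at consecutive nodes, and the product-to-sum
formula turns their alternating sum into a multiple of `∑ T_{m+k+2}` over the Chebyshev–Gauss
points `cos ((2j + 1) π / (2k + 2))`, which vanishes because `2k + 2 ∤ m + k + 2`.
-/

open Real Polynomial Polynomial.Chebyshev Finset

namespace Polynomial.Chebyshev

noncomputable def chebyshevUsequence (R : Type*) [CommRing R] [IsDomain R] [NeZero (2 : R)] :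
    Polynomial.Sequence R where
  elems' n := U R n
  degree_eq' n := degree_U_natCast R n

theorem span_U_eq_degreeLT (K : Type*) [Field K] [NeZero (2 : K)] (k : ℕ) :
    Submodule.span K ((fun m : ℕ => U K m) '' Set.Iio k) = degreeLT K k :=
  (chebyshevUsequence K).span_degreeLT fun i _ =>
    isUnit_iff_ne_zero.mpr (leadingCoeff_ne_zero.mpr ((chebyshevUsequence K).ne_zero i))

theorem integral_eval_U_real (m : ℕ) (a b : ℝ) :
    ∫ x in a..b, (U ℝ m).eval x = ((T ℝ (m + 1)).eval b - (T ℝ (m + 1)).eval a) / (m + 1) := by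
  rw [eq_div_iff (by positivity), mul_comm, ← intervalIntegral.integral_const_mul]
  refine intervalIntegral.integral_eq_sub_of_hasDerivAt (f := fun x => (T ℝ (m + 1)).eval x)
    (fun x _ => ?_) (((U ℝ m).continuous.const_mul _).intervalIntegrable _ _)
  simpa [T_derivative_eq_U] using (T ℝ (m + 1)).hasDerivAt x

theorem sum_neg_one_pow_mul_sub_eval_T_node {n m : ℕ} (hm : m < n) :
    ∑ j ∈ range n, (-1) ^ j * ((T ℝ m).eval (node n j) - (T ℝ m).eval (node n (j + 1))) = 0 := by
  have hn : (n : ℝ) ≠ 0 := by exact_mod_cast (Nat.zero_lt_of_lt hm).ne'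
  have hterm : ∀ j : ℕ, (-1) ^ j * ((T ℝ m).eval (node n j) - (T ℝ m).eval (node n (j + 1))) =
      -2 * sin (m * π / (2 * n)) * (T ℝ (m + n : ℕ)).eval (cos ((2 * j + 1) / (2 * n) * π)) := by
    intro j
    obtain ⟨α, hα⟩ : ∃ α, α = m * (2 * j + 1) * π / (2 * n) := ⟨_, rfl⟩
    obtain ⟨β, hβ⟩ : ∃ β, β = m * π / (2 * n) := ⟨_, rfl⟩
    have h₀ : (m : ℝ) * (j * π / n) = α - β := by rw [hα, hβ]; field_simp; ring
    have h₁ : (m : ℝ) * ((j + 1 : ℕ) * π / n) = α + β := by rw [hα, hβ]; push_cast; field_simp; ring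
    have h₂ : ((m + n : ℕ) : ℝ) * ((2 * j + 1) / (2 * n) * π) = α + j * π + π / 2 := by
      rw [hα]; push_cast; field_simp; ring
    rw [← hβ]
    simp only [node, T_real_cos, Int.cast_natCast]
    rw [h₀, h₁, h₂, cos_add_pi_div_two, sin_add_nat_mul_pi, cos_sub, cos_add]
    ring
  have hzero : ∑ j ∈ range n, (T ℝ (m + n : ℕ)).eval (cos ((2 * j + 1) / (2 * n) * π)) = 0 := by
    have hdvd : ¬ 2 * n ∣ m + n := Nat.not_dvd_of_pos_of_lt (by omega) (by omega)
    have h := sumZeroes_T_of_not_dvd (n := n) (k := (m + n : ℕ)) (by exact_mod_cast hdvd)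
    rw [sumZeroes, mul_eq_zero] at h
    exact h.resolve_left (by positivity)
  rw [sum_congr rfl fun j _ => hterm j, ← mul_sum, hzero, mul_zero]

theorem sign_eval_U_real_cos {k j : ℕ} (hj : j ≤ k) {θ : ℝ} (h₁ : j * π / (k + 1) < θ)
    (h₂ : θ < (j + 1) * π / (k + 1)) : Real.sign ((U ℝ k).eval (cos θ)) = (-1) ^ j := by
  have hk : (0 : ℝ) < k + 1 := by positivity
  have hjk : (j : ℝ) + 1 ≤ k + 1 := by exact_mod_cast Nat.succ_le_succ hj
  rw [div_lt_iff₀ hk] at h₁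
  rw [lt_div_iff₀ hk] at h₂
  have hsin : 0 < sin θ := sin_pos_of_pos_of_lt_pi (by nlinarith [pi_pos]) (by nlinarith [pi_pos])
  have hpos : 0 < sin ((k + 1) * θ - j * π) := sin_pos_of_pos_of_lt_pi (by linarith) (by linarith)
  have hU : (U ℝ k).eval (cos θ) = (-1) ^ j * (sin ((k + 1) * θ - j * π) / sin θ) := by
    rw [← mul_div_assoc, ← sin_add_nat_mul_pi, sub_add_cancel, eq_div_iff hsin.ne', U_real_cos]
    push_cast
    rfl
  rw [hU]
  rcases neg_one_pow_eq_or ℝ j with h | h <;>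
    simp [h, Real.sign_of_pos, Real.sign_of_neg, div_pos hpos hsin]

theorem sign_eval_U_real_of_mem_Ioo {k j : ℕ} (hj : j ≤ k) {x : ℝ}
    (hx : x ∈ Set.Ioo (node (k + 1) (j + 1)) (node (k + 1) j)) :
    Real.sign ((U ℝ k).eval x) = (-1) ^ j := by
  have hx₁ : -1 ≤ x := node_mem_Icc.1.trans hx.1.le
  have hx₂ : x ≤ 1 := hx.2.le.trans node_mem_Icc.2
  have hnode : ∀ i ≤ k + 1, (i * π / (k + 1 : ℕ) : ℝ) ∈ Set.Icc 0 π := fun i hi =>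
    ⟨by positivity, div_le_of_le_mul₀ (by positivity) pi_pos.le (by rw [mul_comm]; gcongr)⟩
  have harccos : arccos x ∈ Set.Icc 0 π := ⟨arccos_nonneg x, arccos_le_pi x⟩
  have h₁ := (strictAntiOn_cos.lt_iff_gt harccos (hnode j (by omega))).mp
    (by rw [cos_arccos hx₁ hx₂]; exact hx.2)
  have h₂ := (strictAntiOn_cos.lt_iff_gt (hnode (j + 1) (by omega)) harccos).mp
    (by rw [cos_arccos hx₁ hx₂]; exact hx.1)
  push_cast at h₁ h₂
  rw [← cos_arccos hx₁ hx₂]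
  exact sign_eval_U_real_cos hj h₁ h₂

theorem integral_mul_sign_eval_U_real (k : ℕ) (p : ℝ[X]) :
    ∫ η in (-1 : ℝ)..1, p.eval η * Real.sign ((U ℝ k).eval η) =
      ∑ j ∈ range (k + 1), (-1) ^ j * ∫ x in node (k + 1) (j + 1)..node (k + 1) j, p.eval x := by
  set f := fun η => p.eval η * Real.sign ((U ℝ k).eval η)
  have hpiece : ∀ j < k + 1, Set.EqOn f (fun x => (-1) ^ j * p.eval x)
      (Set.uIoo (node (k + 1) (j + 1)) (node (k + 1) j)) := by
    intro j hj x hx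
    rw [Set.uIoo_of_le (node_lt hj (Nat.lt_succ_self j)).le] at hx
    simp [f, sign_eval_U_real_of_mem_Ioo (Nat.lt_succ_iff.mp hj) hx, mul_comm]
  have hint : ∀ j < k + 1, IntervalIntegrable f MeasureTheory.volume
      (node (k + 1) j) (node (k + 1) (j + 1)) := fun j hj =>
    (((p.continuous.const_mul _).intervalIntegrable _ _).congr_uIoo (hpiece j hj).symm).symm
  have hsum := intervalIntegral.sum_integral_adjacent_intervals hint
  rw [node_eq_one, node_eq_neg_one k.succ_ne_zero] at hsum
  rw [intervalIntegral.integral_symm, ← hsum, ← sum_neg_distrib]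
  refine sum_congr rfl fun j hj => ?_
  rw [← intervalIntegral.integral_symm,
    intervalIntegral.integral_congr_uIoo (hpiece j (mem_range.mp hj)),
    intervalIntegral.integral_const_mul]

theorem sum_neg_one_pow_mul_integral_node_eq_zero {k : ℕ} {p : ℝ[X]} (hp : p ∈ degreeLT ℝ k) :
    ∑ j ∈ range (k + 1), (-1) ^ j * ∫ x in node (k + 1) (j + 1)..node (k + 1) j, p.eval x = 0 := by
  rw [← span_U_eq_degreeLT ℝ] at hp
  induction hp using Submodule.span_induction with
  | mem q hq =>
    obtain ⟨m, hm, rfl⟩ := hq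
    have h := sum_neg_one_pow_mul_sub_eval_T_node (n := k + 1) (m := m + 1) (by simpa using hm)
    simp_rw [integral_eval_U_real, mul_div_assoc', ← sum_div]
    push_cast at h
    rw [h, zero_div]
  | zero => simp
  | add p q _ _ hp hq =>
    simp_rw [eval_add, intervalIntegral.integral_add (p.continuous.intervalIntegrable _ _)
      (q.continuous.intervalIntegrable _ _), mul_add, sum_add_distrib, hp, hq, add_zero]
  | smul c p _ hp =>
    simp_rw [eval_smul, smul_eq_mul, intervalIntegral.integral_const_mul, mul_left_comm _ c,
      ← mul_sum, hp, mul_zero]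

end Polynomial.Chebyshev

theorem stmt_8 (k : ℕ) (p : Polynomial ℝ) (hp : p.degree < k) :
    ∫ η in (-1 : ℝ)..1,
        p.eval η * Real.sign ((Polynomial.Chebyshev.U ℝ k).eval η) = 0 := by
  rw [integral_mul_sign_eval_U_real,
    sum_neg_one_pow_mul_integral_node_eq_zero (mem_degreeLT.mpr hp)]
end

section
/- For any real c > 1 and any polynomial s of degree at most k, the supremum over η ∈ [-1,1] of |s(η) - 1/(η - c)| is at least (c - √(c² - 1))^k/(c² - 1). -/
open Polynomial Real Set

/-!
Put `c = (ρ + ρ⁻¹) / 2` with `0 < ρ < 1`. Chebyshev's extremal error for `1 / (x - c)` is, at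
`x = cos θ`, the function `E cos ψ(θ)` with `E = ρ ^ k / (c ^ 2 - 1)` and the phase
`ψ(θ) = (k + 1) θ + 2 arg (1 - ρ e^{-iθ})`, which runs continuously from `0` to `(k + 1) π`.
As a function of `x` it is `Q(x) / (Q(c) (c - x))`, where `Q = T_{k+1} - 2ρ T_k + ρ² T_{k-1}`
is the real part of `e^{i(k-1)θ} (e^{iθ} - ρ)²`; hence it equals `p(x) - 1 / (x - c)` for a
polynomial `p` of degree `≤ k`. So the error of `p` equioscillates with amplitude `E` at `k + 2`
points of `[-1, 1]`, and by de la Vallée Poussin's argument every `s` of degree `≤ k` has error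
`≥ E` at one of them: otherwise `s - p` would change sign `k + 1` times.
-/

theorem exists_strictMono_eq_of_continuousOn {f : ℝ → ℝ} {a b : ℝ} {n : ℕ}
    {y : Fin (n + 1) → ℝ} (hab : a ≤ b) (hf : ContinuousOn f (Icc a b)) (hy : StrictMono y)
    (ha : f a ≤ y 0) (hb : y (Fin.last n) ≤ f b) :
    ∃ t : Fin (n + 1) → ℝ, StrictMono t ∧ (∀ j, t j ∈ Icc a b) ∧ ∀ j, f (t j) = y j := by
  induction n generalizing a with
  | zero =>
    obtain ⟨t₀, ht₀, hft₀⟩ := intermediate_value_Icc hab hf ⟨ha, hb⟩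
    refine ⟨fun _ => t₀, fun i j hij => absurd hij (Fin.subsingleton_one.elim i j).not_lt,
      fun _ => ht₀, fun j => ?_⟩
    rw [Fin.fin_one_eq_zero j, hft₀]
  | succ n ih =>
    obtain ⟨t₀, ht₀, hft₀⟩ :=
      intermediate_value_Icc hab hf ⟨ha, (hy.monotone (Fin.zero_le _)).trans hb⟩
    obtain ⟨t, ht, htmem, hft⟩ := ih (y := Fin.tail y) ht₀.2
      (hf.mono (Icc_subset_Icc_left ht₀.1)) (hy.comp Fin.strictMono_succ) (hft₀.trans_le (hy (Fin.succ_pos 0)).le) hb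
    have ht₀_lt : t₀ < t 0 := by
      refine (htmem 0).1.lt_of_ne fun h => (hy (Fin.succ_pos 0)).ne ?_
      rw [← hft₀, h, hft 0]; rfl
    refine ⟨Fin.cons t₀ t, ?_, Fin.cases ht₀ fun j => Icc_subset_Icc_left ht₀.1 (htmem j),
      Fin.cases hft₀ hft⟩
    exact strictMono_vecCons.2 ⟨ht₀_lt, ht⟩

theorem Polynomial.le_natDegree_of_sign_changes {n : ℕ} {d : ℝ[X]} {x : Fin (n + 1) → ℝ}
    (hx : StrictAnti x) (hd : ∀ j : Fin n, d.eval (x j.castSucc) * d.eval (x j.succ) < 0) :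
    n ≤ d.natDegree := by
  have hroot (j : Fin n) : ∃ r ∈ Ioo (x j.succ) (x j.castSucc), d.eval r = 0 := by
    have hlt : x j.succ < x j.castSucc := hx j.castSucc_lt_succ
    have hcont := d.continuous.continuousOn (s := Icc (x j.succ) (x j.castSucc))
    rcases (mul_neg_iff.1 (hd j)) with ⟨hpos, hneg⟩ | ⟨hneg, hpos⟩
    · exact intermediate_value_Ioo hlt.le hcont ⟨hneg, hpos⟩
    · exact intermediate_value_Ioo' hlt.le hcont ⟨hneg, hpos⟩
  choose r hr hr0 using hroot
  have hr_anti : StrictAnti r := fun i j hij =>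
    (hr j).2.trans ((hx.antitone (Fin.succ_le_castSucc_iff.2 hij)).trans_lt (hr i).1)
  by_contra! hlt
  have hd0 : d = 0 := eq_zero_of_natDegree_lt_card_of_eval_eq_zero d hr_anti.injective hr0
    (by simpa using hlt)
  obtain ⟨j⟩ : Nonempty (Fin n) := ⟨⟨0, by omega⟩⟩
  simpa [hd0] using hd j

theorem Polynomial.exists_le_abs_eval_sub_of_alternation {k : ℕ} {g : ℝ → ℝ} {p s : ℝ[X]}
    (hp : p.natDegree ≤ k) (hs : s.natDegree ≤ k) {x : Fin (k + 2) → ℝ} (hx : StrictAnti x)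
    {E : ℝ} (halt : ∀ j, p.eval (x j) - g (x j) = (-1) ^ (j : ℕ) * E) :
    ∃ j, E ≤ |s.eval (x j) - g (x j)| := by
  by_contra! hlt
  have hsign (j : Fin (k + 2)) : (-1) ^ (j : ℕ) * (s - p).eval (x j) < 0 := by
    have hj := (abs_lt.1 (hlt j))
    rw [eval_sub, ← sub_sub_sub_cancel_right _ _ (g (x j)), halt j, mul_sub, ← mul_assoc,
      ← pow_add, Even.neg_one_pow ⟨_, rfl⟩, one_mul]
    rcases neg_one_pow_eq_or ℝ (j : ℕ) with h | h <;> rw [h] <;> linarith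
  have hchanges (j : Fin (k + 1)) :
      (s - p).eval (x j.castSucc) * (s - p).eval (x j.succ) < 0 := by
    have hpos := mul_pos_of_neg_of_neg (hsign j.castSucc) (hsign j.succ)
    rw [Fin.val_succ, Fin.val_castSucc, pow_succ] at hpos
    have hsq : ((-1 : ℝ) ^ (j : ℕ)) ^ 2 = 1 := by
      rw [← pow_mul, mul_comm, pow_mul, neg_one_sq, one_pow]
    linear_combination hpos - (s - p).eval (x j.castSucc) * (s - p).eval (x j.succ) * hsq
  have := (s - p).le_natDegree_of_sign_changes hx hchanges
  have := natDegree_sub_le s p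
  omega

theorem Polynomial.exists_eval_sub_one_div_sub_eq {K : Type*} [Field K] {Q : K[X]} {c : K}
    {k : ℕ} (hQ : Q.natDegree ≤ k + 1) (hQc : Q.eval c ≠ 0) :
    ∃ p : K[X], p.natDegree ≤ k ∧
      ∀ x ≠ c, p.eval x - 1 / (x - c) = Q.eval x / (Q.eval c * (c - x)) := by
  set D : K[X] := 1 - C (Q.eval c)⁻¹ * Q
  have hDdeg : D.natDegree ≤ k + 1 :=
    (natDegree_sub_le _ _).trans (max_le (by simp) ((natDegree_C_mul_le _ _).trans hQ))
  have hDc : D.IsRoot c := by simp [D, hQc]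
  refine ⟨D /ₘ (X - C c), ?_, fun x hx => ?_⟩
  · rw [natDegree_divByMonic _ (monic_X_sub_C c), natDegree_X_sub_C]
    omega
  · have hdiv := congrArg (eval x) (mul_divByMonic_eq_iff_isRoot.2 hDc)
    rw [eval_mul, eval_sub, eval_X, eval_C, mul_comm, ← eq_div_iff (sub_ne_zero.2 hx)] at hdiv
    rw [hdiv]
    simp only [D, eval_sub, eval_mul, eval_C, eval_one]
    have hcx : c - x ≠ 0 := sub_ne_zero.2 hx.symm
    field_simp
    ring

theorem Polynomial.Chebyshev.T_eval_half_add_inv {K : Type*} [Field K] [NeZero (2 : K)]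
    {z : K} (hz : z ≠ 0) (n : ℤ) :
    (T K n).eval ((z + z⁻¹) / 2) = (z ^ n + z ^ (-n)) / 2 := by
  induction n using Polynomial.Chebyshev.induct' with
  | zero => simp
  | one => simp
  | add_two n ih1 ih0 =>
    rw [T_add_two, eval_sub, eval_mul, eval_mul, eval_X, ih1, ih0, eval_ofNat,
      show -((n : ℤ) + 2) = -n - 1 - 1 by ring, show -((n : ℤ) + 1) = -n - 1 by ring]
    simp only [zpow_add₀ hz, zpow_sub₀ hz, zpow_one, zpow_two]
    field_simp
    ring
  | neg n ih => rw [T_neg, ih, neg_neg, add_comm]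

theorem Real.cos_add_two_mul_arctan_div {A : ℝ} (hA : 0 < A) (B φ : ℝ) :
    (A ^ 2 + B ^ 2) * cos (φ + 2 * arctan (B / A)) =
      (A ^ 2 - B ^ 2) * cos φ - 2 * A * B * sin φ := by
  have hcos_sq : cos (arctan (B / A)) ^ 2 * (A ^ 2 + B ^ 2) = A ^ 2 := by
    rw [cos_sq_arctan]; field_simp
  have htan := tan_arctan (B / A)
  rw [tan_eq_sin_div_cos, div_eq_iff (cos_arctan_pos _).ne'] at htan
  have hBA : B / A * A = B := div_mul_cancel₀ B hA.ne'
  rw [cos_add, cos_two_mul, sin_two_mul, htan]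
  linear_combination (2 * cos φ - 2 * (B / A) * sin φ) * hcos_sq - 2 * A * sin φ * hBA

noncomputable def extremalNumerator (ρ : ℝ) (k : ℕ) : ℝ[X] :=
  Chebyshev.T ℝ (k + 1) - C (2 * ρ) * Chebyshev.T ℝ k + C (ρ ^ 2) * Chebyshev.T ℝ (k - 1)

noncomputable def extremalPhase (ρ : ℝ) (k : ℕ) (θ : ℝ) : ℝ :=
  (k + 1) * θ + 2 * arctan (ρ * sin θ / (1 - ρ * cos θ))

section
variable {ρ : ℝ} (k : ℕ)

theorem natDegree_extremalNumerator_le : (extremalNumerator ρ k).natDegree ≤ k + 1 := by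
  have hT (n : ℤ) (hn : n.natAbs ≤ k + 1) : (Chebyshev.T ℝ n).natDegree ≤ k + 1 := by
    rwa [Chebyshev.natDegree_T]
  unfold extremalNumerator
  refine natDegree_add_le_of_degree_le
    ((natDegree_sub_le _ _).trans (max_le (hT (k + 1) (by omega)) ?_)) ?_
  · exact (natDegree_C_mul_le _ _).trans (hT k (by omega))
  · exact (natDegree_C_mul_le _ _).trans (hT (k - 1) (by omega))

theorem one_sub_mul_cos_pos (hρ : |ρ| < 1) (θ : ℝ) : 0 < 1 - ρ * cos θ := by
  have := abs_mul ρ (cos θ) ▸ mul_le_of_le_one_right (abs_nonneg ρ) (abs_cos_le_one θ)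
  linarith [le_abs_self (ρ * cos θ)]

theorem extremalNumerator_eval_cos (hρ : |ρ| < 1) (θ : ℝ) :
    (extremalNumerator ρ k).eval (cos θ) =
      (1 - 2 * ρ * cos θ + ρ ^ 2) * cos (extremalPhase ρ k θ) := by
  have key := cos_add_two_mul_arctan_div (one_sub_mul_cos_pos hρ θ) (ρ * sin θ) ((k + 1) * θ)
  have hk : (k : ℝ) * θ = (k + 1) * θ - θ := by ring
  have hk' : ((k : ℝ) - 1) * θ = (k + 1) * θ - 2 * θ := by ring
  simp only [extremalNumerator, eval_add, eval_sub, eval_mul, eval_C, Chebyshev.T_real_cos,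
    Int.cast_add, Int.cast_sub, Int.cast_natCast, Int.cast_one, hk, hk', cos_sub, cos_two_mul,
    sin_two_mul, extremalPhase]
  linear_combination -key + ρ ^ 2 * (cos ((k + 1) * θ) +
    cos ((k + 1) * θ + 2 * arctan (ρ * sin θ / (1 - ρ * cos θ)))) * sin_sq_add_cos_sq θ

theorem extremalNumerator_eval_half_add_inv (hρ : ρ ≠ 0) :
    (extremalNumerator ρ k).eval ((ρ + ρ⁻¹) / 2) = (1 - ρ ^ 2) ^ 2 / (2 * ρ ^ (k + 1)) := by
  simp only [extremalNumerator, eval_add, eval_sub, eval_mul, eval_C,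
    Chebyshev.T_eval_half_add_inv hρ]
  simp only [neg_add, neg_sub, zpow_add₀ hρ, zpow_sub₀ hρ, zpow_neg, zpow_natCast, zpow_one]
  field_simp
  ring

theorem continuous_extremalPhase (hρ : |ρ| < 1) : Continuous (extremalPhase ρ k) := by
  unfold extremalPhase
  fun_prop (disch := exact fun θ => (one_sub_mul_cos_pos hρ θ).ne')

theorem extremalPhase_zero : extremalPhase ρ k 0 = 0 := by simp [extremalPhase]

theorem extremalPhase_pi : extremalPhase ρ k π = (k + 1) * π := by simp [extremalPhase]

theorem exists_alternation_one_div_sub {c : ℝ} (hρ0 : 0 < ρ) (hρ1 : ρ < 1)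
    (hc : ρ ^ 2 + 1 = 2 * c * ρ) :
    ∃ p : ℝ[X], p.natDegree ≤ k ∧ ∃ x : Fin (k + 2) → ℝ, StrictAnti x ∧
      (∀ j, x j ∈ Icc (-1) 1) ∧
        ∀ j, p.eval (x j) - 1 / (x j - c) = (-1) ^ (j : ℕ) * (ρ ^ k / (c ^ 2 - 1)) := by
  have hρ : |ρ| < 1 := abs_lt.2 ⟨by linarith, hρ1⟩
  have hc_eq : c = (ρ + ρ⁻¹) / 2 := by field_simp; linarith
  have hQc : (extremalNumerator ρ k).eval c = (1 - ρ ^ 2) ^ 2 / (2 * ρ ^ (k + 1)) := by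
    rw [hc_eq, extremalNumerator_eval_half_add_inv k hρ0.ne']
  have hρ_sq : 0 < 1 - ρ ^ 2 := by nlinarith
  have hQc_ne : (extremalNumerator ρ k).eval c ≠ 0 := by rw [hQc]; positivity
  obtain ⟨p, hp, hp_eval⟩ :=
    exists_eval_sub_one_div_sub_eq (natDegree_extremalNumerator_le k) hQc_ne
  obtain ⟨t, ht_mono, ht_mem, ht_phase⟩ := exists_strictMono_eq_of_continuousOn (n := k + 1)
    (y := fun j => (j : ℕ) * π) pi_pos.le (continuous_extremalPhase k hρ).continuousOn
    (fun i j hij => mul_lt_mul_of_pos_right (by exact_mod_cast hij) pi_pos)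
    (by simp [extremalPhase_zero]) (by simp [extremalPhase_pi])
  have hc_gt (θ : ℝ) : cos θ < c := by
    have : 2 * ρ * (c - 1) = (1 - ρ) ^ 2 := by linear_combination -hc
    nlinarith [cos_le_one θ, sub_pos.2 hρ1]
  refine ⟨p, hp, cos ∘ t, fun i j hij => strictAntiOn_cos (ht_mem i) (ht_mem j) (ht_mono hij),
    fun j => ⟨neg_one_le_cos _, cos_le_one _⟩, fun j => ?_⟩
  have hden : 1 - 2 * ρ * cos (t j) + ρ ^ 2 = 2 * ρ * (c - cos (t j)) := by
    linear_combination hc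
  rw [Function.comp_apply, hp_eval _ (hc_gt _).ne, extremalNumerator_eval_cos k hρ, ht_phase,
    cos_nat_mul_pi, hden, hQc]
  have := (sub_pos.2 (hc_gt (t j))).ne'
  have : c ^ 2 - 1 ≠ 0 := by nlinarith
  field_simp
  linear_combination -ρ ^ k * (ρ ^ 2 + 1 + 2 * c * ρ) * hc
end

theorem stmt_12 (c : ℝ) (hc : 1 < c) (k : ℕ) (s : Polynomial ℝ) (hs : s.degree ≤ k) :
    sSup ((fun η => |s.eval η - 1 / (η - c)|) '' Set.Icc (-1 : ℝ) 1) ≥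
      (c - Real.sqrt (c ^ 2 - 1)) ^ k / (c ^ 2 - 1) := by
  have hsqrt : √(c ^ 2 - 1) ^ 2 = c ^ 2 - 1 := sq_sqrt (by nlinarith)
  have hsqrt_nonneg := sqrt_nonneg (c ^ 2 - 1)
  obtain ⟨p, hp, x, hx, hx_mem, halt⟩ := exists_alternation_one_div_sub k
    (ρ := c - √(c ^ 2 - 1)) (by nlinarith) (by nlinarith) (by linear_combination hsqrt)
  obtain ⟨j, hj⟩ := exists_le_abs_eval_sub_of_alternation (g := fun η => 1 / (η - c)) hp
    (natDegree_le_iff_degree_le.2 hs) hx halt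
  have hcont : ContinuousOn (fun η => |s.eval η - 1 / (η - c)|) (Icc (-1) 1) :=
    (s.continuous.continuousOn.sub (continuousOn_const.div (continuousOn_id.sub continuousOn_const)
      fun _ hη => sub_ne_zero.2 (hη.2.trans_lt hc).ne)).abs
  exact hj.trans (le_csSup (isCompact_Icc.image_of_continuousOn hcont).bddAbove
    (mem_image_of_mem _ (hx_mem j)))
end

section
/- Let μ < L be reals and k ≥ 1. Define Ũ_k(η) = U_k(2η/(μ - L)), where U_k is the k-th Chebyshev polynomial of the second kind. Then for every polynomial p of degree at most k-1, ∫_{-(L-μ)/2}^{(L-μ)/2} p(η)·sgn(Ũ_k(η)) dη = 0. -/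
/-!
With `n = k + 1`, the Chebyshev–Lobatto nodes `cos (i π / n)` cut `[-1, 1]` into `n` intervals
on which `U_k (cos θ) = sin (n θ) / sin θ` has the constant sign `(-1) ^ i`. Hence, for an
antiderivative `Q` of `q`, the integral of `q · sgn U_k` over `[-1, 1]` is the alternating sum
`∑ (-1) ^ i (Q (node i) - Q (node (i + 1)))`. This is linear in `Q`, which has degree `< n`, so it
suffices to check it on `T_m` with `m < n`, where it becomes a telescoping trigonometric sum.
The general interval follows by a linear change of variables.
-/

open Polynomial Polynomial.Chebyshev Real Finset

lemma cos_mul_alternating_sum_cos_sub (α : ℝ) (n : ℕ) :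
    cos α * ∑ j ∈ range n, (-1) ^ j * (cos (2 * j * α) - cos (2 * (j + 1) * α)) =
      -((-1) ^ n * sin α * sin (2 * n * α)) := by
  set f : ℕ → ℝ := fun j => (-1) ^ j * sin (2 * j * α)
  have hterm (j : ℕ) : cos α * ((-1) ^ j * (cos (2 * j * α) - cos (2 * (j + 1) * α))) =
      sin α * (f j - f (j + 1)) := by
    have h2 : 2 * (j + 1) * α = 2 * j * α + 2 * α := by ring
    simp only [f, Nat.cast_succ]
    rw [h2, cos_add, sin_add, cos_two_mul, sin_two_mul, pow_succ]
    linear_combination (-2 * (-1) ^ j * cos α * cos (2 * j * α)) * sin_sq_add_cos_sq α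
  rw [mul_sum, sum_congr rfl fun j _ => hterm j, ← mul_sum, sum_range_sub']
  simp only [f, pow_zero, CharP.cast_eq_zero, mul_zero, zero_mul, sin_zero, zero_sub]
  ring

lemma alternating_sum_eval_T_node_sub_eq_zero {n m : ℕ} (hmn : m < n) :
    ∑ i ∈ range n, (-1) ^ i * ((T ℝ m).eval (node n i) - (T ℝ m).eval (node n (i + 1))) = 0 := by
  have hn : (0 : ℝ) < n := by exact_mod_cast (Nat.zero_le m).trans_lt hmn
  set α := m * π / (2 * n) with hα
  have hcos : cos α ≠ 0 := by
    refine (cos_pos_of_mem_Ioo ⟨by linarith [show 0 ≤ α by positivity, pi_pos], ?_⟩).ne'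
    rw [hα, div_lt_iff₀ (by positivity)]
    have : (m : ℝ) < n := by exact_mod_cast hmn
    nlinarith [pi_pos]
  have hnode (i : ℕ) : (T ℝ m).eval (node n i) = cos (2 * i * α) := by
    rw [node, T_real_cos, hα]
    congr 1
    field_simp
    push_cast
    ring
  have hsin : sin (2 * n * α) = 0 := by
    rw [show 2 * n * α = m * π by rw [hα]; field_simp]
    exact sin_nat_mul_pi m
  refine (mul_eq_zero.mp ?_).resolve_left hcos
  simp_rw [hnode, Nat.cast_succ]
  rw [cos_mul_alternating_sum_cos_sub, hsin, mul_zero, neg_zero]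

noncomputable def alternatingNodeSum (n : ℕ) : ℝ[X] →ₗ[ℝ] ℝ :=
  ∑ i ∈ range n, (-1 : ℝ) ^ i • (leval (node n i) - leval (node n (i + 1)))

lemma alternatingNodeSum_apply (n : ℕ) (Q : ℝ[X]) :
    alternatingNodeSum n Q =
      ∑ i ∈ range n, (-1) ^ i * (Q.eval (node n i) - Q.eval (node n (i + 1))) := by
  simp [alternatingNodeSum]

lemma alternatingNodeSum_eq_zero {n : ℕ} {Q : ℝ[X]} (hQ : Q.degree < n) :
    alternatingNodeSum n Q = 0 := by
  have hspan : degreeLT ℝ n ≤ LinearMap.ker (alternatingNodeSum n) := by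
    rw [← Sequence.span_degreeLT (chebyshevTsequence ℝ) (by simp), Submodule.span_le]
    rintro _ ⟨m, hm, rfl⟩
    exact (alternatingNodeSum_apply n _).trans (alternating_sum_eval_T_node_sub_eq_zero hm)
  exact hspan (mem_degreeLT.mpr hQ)

lemma sign_neg_one_pow_mul_of_pos {s : ℝ} (hs : 0 < s) (i : ℕ) :
    Real.sign ((-1) ^ i * s) = (-1) ^ i := by
  rcases Nat.even_or_odd i with hi | hi
  · rw [hi.neg_one_pow, one_mul, Real.sign_of_pos hs]
  · rw [hi.neg_one_pow, neg_one_mul, Real.sign_neg, Real.sign_of_pos hs]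

lemma arccos_node {n i : ℕ} (hi : i ≤ n) : arccos (node n i) = i * π / n := by
  rcases eq_or_ne n 0 with rfl | hn
  · simp [node]
  refine arccos_cos (by positivity) ?_
  rw [div_le_iff₀ (by positivity)]
  have : (i : ℝ) ≤ n := by exact_mod_cast hi
  nlinarith [pi_pos]

lemma sign_eval_U_of_mem_Ioo {k i : ℕ} (hi : i ≤ k) {x : ℝ}
    (hx : x ∈ Set.Ioo (node (k + 1) (i + 1)) (node (k + 1) i)) :
    Real.sign ((U ℝ k).eval x) = (-1) ^ i := by
  obtain ⟨hx₁, hx₂⟩ := hx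
  have hx₁' : -1 < x := node_mem_Icc.1.trans_lt hx₁
  have hx₂' : x < 1 := hx₂.trans_le node_mem_Icc.2
  set θ := arccos x
  have hθ₁ : i * π < (k + 1) * θ := by
    have := arccos_lt_arccos hx₁'.le hx₂ node_mem_Icc.2
    rw [arccos_node (by omega), Nat.cast_succ, div_lt_iff₀ (by positivity)] at this
    linarith
  have hθ₂ : (k + 1) * θ < i * π + π := by
    have := arccos_lt_arccos node_mem_Icc.1 hx₁ hx₂'.le
    rw [arccos_node (by omega), Nat.cast_succ, Nat.cast_succ, lt_div_iff₀ (by positivity)] at this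
    linarith
  have hsinθ : 0 < sin θ := sin_pos_of_pos_of_lt_pi (arccos_pos.2 hx₂') (arccos_lt_pi.2 hx₁')
  have hsinφ : 0 < sin ((k + 1) * θ - i * π) :=
    sin_pos_of_pos_of_lt_pi (by linarith) (by linarith)
  have hU : (U ℝ k).eval x = (-1) ^ i * (sin ((k + 1) * θ - i * π) / sin θ) := by
    rw [mul_div_assoc', eq_div_iff hsinθ.ne', ← sin_add_nat_mul_pi, sub_add_cancel,
      ← cos_arccos hx₁'.le hx₂'.le]
    exact_mod_cast U_real_cos θ k
  rw [hU, sign_neg_one_pow_mul_of_pos (div_pos hsinφ hsinθ)]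

lemma eqOn_derivative_mul_sign_U {k i : ℕ} (hi : i ≤ k) (Q : ℝ[X]) :
    Set.EqOn (fun x => Q.derivative.eval x * Real.sign ((U ℝ k).eval x))
      (fun x => (-1) ^ i * Q.derivative.eval x)
      (Set.uIoo (node (k + 1) i) (node (k + 1) (i + 1))) := by
  intro x hx
  rw [Set.uIoo_comm, Set.uIoo_of_le (node_lt (by omega) (Nat.lt_succ_self i)).le] at hx
  simp only [sign_eval_U_of_mem_Ioo hi hx, mul_comm]

lemma integral_derivative_mul_sign_U (k : ℕ) (Q : ℝ[X]) :
    ∫ x in (-1)..1, Q.derivative.eval x * Real.sign ((U ℝ k).eval x) =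
      alternatingNodeSum (k + 1) Q := by
  have hint (i : ℕ) (hi : i < k + 1) :=
    (intervalIntegrable_congr_uIoo (eqOn_derivative_mul_sign_U (Nat.lt_succ_iff.mp hi) Q)).mpr
      ((Q.derivative.continuous.const_mul _).intervalIntegrable (μ := MeasureTheory.volume) _ _)
  have hsum := intervalIntegral.sum_integral_adjacent_intervals hint
  rw [node_eq_one, node_eq_neg_one (Nat.succ_ne_zero k)] at hsum
  rw [intervalIntegral.integral_symm, ← hsum, alternatingNodeSum_apply, ← sum_neg_distrib]
  refine sum_congr rfl fun i hi => ?_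
  rw [intervalIntegral.integral_congr_uIoo
      (eqOn_derivative_mul_sign_U (Nat.lt_succ_iff.mp (mem_range.mp hi)) Q),
    intervalIntegral.integral_const_mul, intervalIntegral.integral_eq_sub_of_hasDerivAt
      (fun x _ => Q.hasDerivAt x) (Q.derivative.continuous.intervalIntegrable _ _)]
  ring

lemma exists_derivative_eq {K : Type*} [Field K] [CharZero K] (q : K[X]) :
    ∃ Q : K[X], derivative Q = q := by
  induction q using Polynomial.induction_on' with
  | add p q hp hq =>
    obtain ⟨P, rfl⟩ := hp
    obtain ⟨Q, rfl⟩ := hq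
    exact ⟨P + Q, derivative_add⟩
  | monomial n a =>
    refine ⟨monomial (n + 1) (a / (n + 1)), ?_⟩
    rw [derivative_monomial, Nat.add_sub_cancel, Nat.cast_succ,
      div_mul_cancel₀ _ (Nat.cast_add_one_ne_zero n)]

lemma degree_lt_succ_of_degree_derivative_lt {R : Type*} [Ring R] [IsDomain R] [CharZero R]
    {Q : R[X]} {n : ℕ} (h : (derivative Q).degree < n) : Q.degree < ↑(n + 1) := by
  rw [degree_lt_iff_coeff_zero] at h ⊢
  intro m hm
  obtain ⟨j, rfl⟩ := Nat.exists_eq_add_of_le' (Nat.one_le_of_lt hm)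
  have := h j (by omega)
  rw [coeff_derivative] at this
  exact (mul_eq_zero.mp this).resolve_right (Nat.cast_add_one_ne_zero j)

theorem integral_eval_mul_sign_eval_U_eq_zero {k : ℕ} {q : ℝ[X]} (hq : q.degree < k) :
    ∫ x in (-1)..1, q.eval x * Real.sign ((U ℝ k).eval x) = 0 := by
  obtain ⟨Q, rfl⟩ := exists_derivative_eq q
  rw [integral_derivative_mul_sign_U]
  exact alternatingNodeSum_eq_zero (degree_lt_succ_of_degree_derivative_lt hq)

theorem integral_eval_mul_sign_eval_U_div_eq_zero {k : ℕ} {p : ℝ[X]} (hp : p.degree < k)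
    (c : ℝ) : ∫ x in -c..c, p.eval x * Real.sign ((U ℝ k).eval (x / c)) = 0 := by
  rcases eq_or_ne c 0 with rfl | hc
  · simp
  have hq : (p.comp (C c * X)).degree < k := by
    rw [degree_lt_iff_coeff_zero] at hp ⊢
    intro m hm
    rw [comp_C_mul_X_coeff, hp m hm, zero_mul]
  have heval (x : ℝ) : p.eval x = (p.comp (C c * X)).eval (x / c) := by
    simp [mul_div_cancel₀ _ hc]
  simp_rw [heval]
  rw [intervalIntegral.integral_comp_div
      (fun x => (p.comp (C c * X)).eval x * Real.sign ((U ℝ k).eval x)) hc,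
    neg_div, div_self hc, integral_eval_mul_sign_eval_U_eq_zero hq, smul_zero]

theorem stmt_13_general (μ L : ℝ) (k : ℕ)
    (p : Polynomial ℝ) (hp : p.degree < k) :
    ∫ η in (-(L - μ) / 2)..((L - μ) / 2),
        p.eval η * Real.sign ((Polynomial.Chebyshev.U ℝ k).eval (2 * η / (μ - L))) = 0 := by
  have h := integral_eval_mul_sign_eval_U_div_eq_zero hp ((μ - L) / 2)
  rw [intervalIntegral.integral_symm, neg_eq_zero, ← neg_div, neg_sub] at h
  simpa only [neg_sub, div_div_eq_mul_div, mul_comm _ (2 : ℝ)] using h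

theorem stmt_13 (μ L : ℝ) (hμL : μ < L) (k : ℕ) (hk : 1 ≤ k)
    (p : Polynomial ℝ) (hp : p.degree < k) :
    ∫ η in (-(L - μ) / 2)..((L - μ) / 2),
        p.eval η * Real.sign ((Polynomial.Chebyshev.U ℝ k).eval (2 * η / (μ - L))) = 0 :=
  stmt_13_general μ L k p hp
end

section
/- For any real u > 1 and any positive integer k, ∫_{-1}^{1} sgn(sin(k·arccos η))/(u - η) dη ≥ ((1 - √((u-1)/(u+1)))/(1 + √((u-1)/(u+1))))^k. -/
open Real Finset Polynomial

/-!
On the arc `η = cos θ`, `θ ∈ (jπ/k, (j+1)π/k)`, the sign of `sin (kθ)` is `(-1)^j`, so the integral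
is an alternating sum of the values `G m = log (u - cos (mπ/k))`. As `G (2k - m) = G m`, this is
`∑ m < 2k, (-1)^(m+1) G m`: a sum over all `2k`-th roots of unity, namely the log of the product over
the roots of `X^k = -1` minus that over the roots of `X^k = 1`. Writing `u = (z + z⁻¹)/2` with `z > 1`,
these products are `(z^k ± 1)^2 / (2z)^k`, so the integral equals `2 log ((z^k + 1)/(z^k - 1))`, which
is at least `z^(-k)`; and `z⁻¹` is exactly `(1 - √((u-1)/(u+1))) / (1 + √((u-1)/(u+1)))`.
-/

lemma normSq_ofReal_sub_exp_mul_I (z θ : ℝ) :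
    Complex.normSq (z - Complex.exp (θ * Complex.I)) = z ^ 2 - 2 * z * cos θ + 1 := by
  rw [Complex.exp_mul_I, ← Complex.ofReal_cos, ← Complex.ofReal_sin, Complex.normSq_apply]
  simp only [Complex.sub_re, Complex.sub_im, Complex.add_re, Complex.add_im, Complex.mul_re,
    Complex.mul_im, Complex.ofReal_re, Complex.ofReal_im, Complex.I_re, Complex.I_im]
  nlinarith [sin_sq_add_cos_sq θ]

theorem prod_sq_sub_two_mul_mul_cos_add_one (z θ : ℝ) {k : ℕ} (hk : k ≠ 0) :
    ∏ j ∈ range k, (z ^ 2 - 2 * z * cos (θ + 2 * π * j / k) + 1) =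
      (z ^ k) ^ 2 - 2 * z ^ k * cos (k * θ) + 1 := by
  have hroot := X_pow_sub_C_eq_prod (Complex.isPrimitiveRoot_exp k hk) (Nat.pos_of_ne_zero hk)
    (α := Complex.exp (θ * Complex.I)) rfl
  have h := congrArg (fun p => Complex.normSq (p.eval (z : ℂ))) hroot
  simp only [eval_sub, eval_pow, eval_X, eval_C, eval_prod, map_prod] at h
  have hk' : (k : ℂ) ≠ 0 := Nat.cast_ne_zero.mpr hk
  rw [← Complex.exp_nat_mul, ← Complex.ofReal_pow,
    show (k : ℂ) * (θ * Complex.I) = ((k * θ : ℝ) : ℂ) * Complex.I by push_cast; ring,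
    normSq_ofReal_sub_exp_mul_I] at h
  rw [h]
  refine prod_congr rfl fun j _ => ?_
  rw [← Complex.exp_nat_mul, ← Complex.exp_add, ← normSq_ofReal_sub_exp_mul_I]
  congr 3
  push_cast
  field_simp
  ring

lemma sign_sin_of_mem_Ioo {x : ℝ} (j : ℕ) (hx : x ∈ Set.Ioo (j * π) ((j + 1) * π)) :
    sign (sin x) = (-1) ^ j := by
  have hpos : 0 < sin (x - j * π) :=
    sin_pos_of_pos_of_lt_pi (by linarith [hx.1]) (by linarith [hx.2])
  rw [sin_sub_nat_mul_pi] at hpos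
  rcases neg_one_pow_eq_or ℝ j with h | h <;> rw [h] at hpos ⊢
  · exact sign_of_pos (by linarith)
  · exact sign_of_neg (by linarith)

lemma arccos_mem_Ioo_of_mem_Ioo_cos {a b η : ℝ} (ha : 0 ≤ a) (hab : a ≤ b) (hb : b ≤ π)
    (hη : η ∈ Set.Ioo (cos b) (cos a)) : arccos η ∈ Set.Ioo a b := by
  constructor
  · calc a = arccos (cos a) := (arccos_cos ha (hab.trans hb)).symm
      _ < arccos η := arccos_lt_arccos ((neg_one_le_cos b).trans hη.1.le) hη.2 (cos_le_one a)
  · calc arccos η < arccos (cos b) :=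
          arccos_lt_arccos (neg_one_le_cos b) hη.1 (hη.2.le.trans (cos_le_one a))
      _ = b := arccos_cos (ha.trans hab) hb

lemma sign_sin_mul_arccos_of_mem_Ioo {k j : ℕ} (hj : j < k) {η : ℝ}
    (hη : η ∈ Set.Ioo (cos ((j + 1 : ℕ) * π / k)) (cos (j * π / k))) :
    sign (sin (k * arccos η)) = (-1) ^ j := by
  have hk : (0 : ℝ) < k := by exact_mod_cast j.zero_le.trans_lt hj
  have hjk : (j + 1 : ℝ) ≤ k := by exact_mod_cast hj
  push_cast at hη
  obtain ⟨h1, h2⟩ := arccos_mem_Ioo_of_mem_Ioo_cos (by positivity)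
    (by gcongr; linarith) (by rw [div_le_iff₀ hk]; nlinarith [pi_pos]) hη
  refine sign_sin_of_mem_Ioo j ⟨?_, ?_⟩
  · rwa [div_lt_iff₀' hk] at h1
  · rwa [lt_div_iff₀' hk] at h2

lemma integral_inv_sub {u a b : ℝ} (ha : a < u) (hb : b < u) :
    ∫ x in a..b, (u - x)⁻¹ = log (u - a) - log (u - b) := by
  rw [intervalIntegral.integral_comp_sub_left (fun x => x⁻¹) u,
    integral_inv_of_pos (by linarith) (by linarith), log_div (by linarith) (by linarith)]

lemma intervalIntegrable_inv_sub {u a b : ℝ} (ha : a < u) (hb : b < u) :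
    IntervalIntegrable (fun x => (u - x)⁻¹) MeasureTheory.volume a b := by
  refine ContinuousOn.intervalIntegrable ?_
  refine (continuousOn_const.sub continuousOn_id).inv₀ fun x hx => ?_
  rw [Set.mem_uIcc] at hx
  show u - x ≠ 0
  rcases hx with hx | hx <;> linarith [hx.2]

lemma cos_succ_mul_pi_div_le {k j : ℕ} (hj : j < k) :
    cos ((j + 1 : ℕ) * π / k) ≤ cos (j * π / k) := by
  have hk : (0 : ℝ) < k := by exact_mod_cast j.zero_le.trans_lt hj
  have hjk : ((j + 1 : ℕ) : ℝ) ≤ k := by exact_mod_cast hj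
  apply cos_le_cos_of_nonneg_of_le_pi (by positivity)
    (by rw [div_le_iff₀ hk]; nlinarith [pi_pos])
  gcongr
  linarith

lemma eqOn_sign_sin_mul_arccos_div {u : ℝ} {k j : ℕ} (hj : j < k) :
    Set.EqOn (fun η => sign (sin (k * arccos η)) / (u - η)) (fun η => (-1) ^ j * (u - η)⁻¹)
      (Set.uIoo (cos ((j + 1 : ℕ) * π / k)) (cos (j * π / k))) := by
  intro η hη
  rw [Set.uIoo_of_le (cos_succ_mul_pi_div_le hj)] at hη
  simp only [sign_sin_mul_arccos_of_mem_Ioo hj hη, div_eq_mul_inv]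

lemma integral_sign_sin_mul_arccos_div_eq_sum {u : ℝ} (hu : 1 < u) {k : ℕ} (hk : k ≠ 0) :
    ∫ η in (-1 : ℝ)..1, sign (sin (k * arccos η)) / (u - η) =
      ∑ j ∈ range k, (-1) ^ j *
        (log (u - cos ((j + 1 : ℕ) * π / k)) - log (u - cos (j * π / k))) := by
  set f := fun η => sign (sin (k * arccos η)) / (u - η)
  have hlt : ∀ m : ℕ, cos (m * π / k) < u := fun m => (cos_le_one _).trans_lt hu
  have hint : ∀ j < k, IntervalIntegrable f MeasureTheory.volume
      (cos (j * π / k)) (cos ((j + 1 : ℕ) * π / k)) := fun j hj =>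
    (((intervalIntegrable_inv_sub (hlt _) (hlt _)).const_mul _).congr_uIoo
      (eqOn_sign_sin_mul_arccos_div hj).symm).symm
  have hsum := intervalIntegral.sum_integral_adjacent_intervals hint
  have hk' : (k : ℝ) ≠ 0 := Nat.cast_ne_zero.mpr hk
  simp only [Nat.cast_zero, zero_mul, zero_div, cos_zero, mul_div_cancel_left₀ _ hk', cos_pi]
    at hsum
  rw [intervalIntegral.integral_symm, ← hsum, ← sum_neg_distrib]
  refine sum_congr rfl fun j hj => ?_
  rw [← intervalIntegral.integral_symm,
    intervalIntegral.integral_congr_uIoo (eqOn_sign_sin_mul_arccos_div (mem_range.1 hj)),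
    intervalIntegral.integral_const_mul, integral_inv_sub (hlt _) (hlt _)]

lemma sum_range_neg_one_pow_mul_sub_of_reflect {k : ℕ} {G : ℕ → ℝ}
    (hG : ∀ m ≤ 2 * k, G (2 * k - m) = G m) :
    ∑ j ∈ range k, (-1) ^ j * (G (j + 1) - G j) = ∑ j ∈ range k, (G (2 * j + 1) - G (2 * j)) := by
  have hpair : ∀ n, ∑ m ∈ range (2 * n), (-1) ^ (m + 1) * G m =
      ∑ j ∈ range n, (G (2 * j + 1) - G (2 * j)) := by
    intro n
    induction n with
    | zero => simp
    | succ n ih =>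
      rw [mul_add_one, sum_range_succ, sum_range_succ, ih, sum_range_succ]
      simp only [pow_succ, pow_mul]
      ring
  have hupper : ∑ m ∈ range k, (-1) ^ (k + m + 1) * G (k + m) =
      ∑ j ∈ range k, (-1) ^ j * G (j + 1) := by
    rw [← sum_range_reflect]
    refine sum_congr rfl fun j hj => ?_
    have hj := mem_range.1 hj
    rw [show k + (k - 1 - j) + 1 = j + 2 * (k - j) by omega,
      show k + (k - 1 - j) = 2 * k - (j + 1) by omega, hG _ (by omega), pow_add, pow_mul,
      neg_one_sq, one_pow, mul_one]
  rw [← hpair, two_mul, sum_range_add, hupper, ← sum_add_distrib]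
  refine sum_congr rfl fun j _ => ?_
  ring

lemma add_inv_div_two_sub_cos (z φ : ℝ) (hz : z ≠ 0) :
    (z + z⁻¹) / 2 - cos φ = (z ^ 2 - 2 * z * cos φ + 1) / (2 * z) := by
  field_simp
  ring

lemma sum_log_sub_cos_odd_sub_even {z : ℝ} (hz : 1 < z) {k : ℕ} (hk : k ≠ 0) :
    ∑ j ∈ range k, (log ((z + z⁻¹) / 2 - cos ((2 * j + 1 : ℕ) * π / k)) -
        log ((z + z⁻¹) / 2 - cos ((2 * j : ℕ) * π / k))) =
      2 * log ((z ^ k + 1) / (z ^ k - 1)) := by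
  set P : ℝ → ℝ := fun φ => z ^ 2 - 2 * z * cos φ + 1
  have hP : ∀ φ, 0 < P φ := fun φ => by
    nlinarith [cos_le_one φ, sq_nonneg (z - 1)]
  have hk' : (k : ℝ) ≠ 0 := Nat.cast_ne_zero.mpr hk
  have hz0 : z ≠ 0 := by positivity
  have hodd : ∏ j ∈ range k, P ((2 * j + 1 : ℕ) * π / k) = (z ^ k + 1) ^ 2 := by
    convert prod_sq_sub_two_mul_mul_cos_add_one z (π / k) hk using 3 with j
    · push_cast; ring_nf
    · rw [mul_div_cancel₀ _ hk', cos_pi]; ring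
  have heven : ∏ j ∈ range k, P ((2 * j : ℕ) * π / k) = (z ^ k - 1) ^ 2 := by
    convert prod_sq_sub_two_mul_mul_cos_add_one z 0 hk using 3 with j
    · push_cast; ring_nf
    · rw [mul_zero, cos_zero]; ring
  have hzk : 1 < z ^ k := one_lt_pow₀ hz hk
  calc _ = ∑ j ∈ range k, (log (P ((2 * j + 1 : ℕ) * π / k)) - log (P ((2 * j : ℕ) * π / k))) := by
        refine sum_congr rfl fun j _ => ?_
        rw [add_inv_div_two_sub_cos _ _ hz0, add_inv_div_two_sub_cos _ _ hz0,
          log_div (hP _).ne' (by positivity), log_div (hP _).ne' (by positivity)]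
        ring
    _ = log ((z ^ k + 1) ^ 2) - log ((z ^ k - 1) ^ 2) := by
        rw [sum_sub_distrib, ← log_prod fun j _ => (hP _).ne', ← log_prod fun j _ => (hP _).ne',
          hodd, heven]
    _ = 2 * log ((z ^ k + 1) / (z ^ k - 1)) := by
        rw [log_pow, log_pow, log_div (by positivity) (by linarith)]
        push_cast
        ring

theorem integral_sign_sin_mul_arccos_div {z : ℝ} (hz : 1 < z) {k : ℕ} (hk : k ≠ 0) :
    ∫ η in (-1 : ℝ)..1, sign (sin (k * arccos η)) / ((z + z⁻¹) / 2 - η) =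
      2 * log ((z ^ k + 1) / (z ^ k - 1)) := by
  have hu : 1 < (z + z⁻¹) / 2 := by
    have hsub : (z + z⁻¹) / 2 - 1 = (z - 1) ^ 2 / (2 * z) := by field_simp; ring
    linarith [div_pos (pow_pos (sub_pos.2 hz) 2) (by linarith : (0 : ℝ) < 2 * z)]
  have hreflect : ∀ m ≤ 2 * k, log ((z + z⁻¹) / 2 - cos ((2 * k - m : ℕ) * π / k)) =
      log ((z + z⁻¹) / 2 - cos (m * π / k)) := fun m hm => by
    have hk' : (k : ℝ) ≠ 0 := Nat.cast_ne_zero.mpr hk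
    rw [Nat.cast_sub hm, show ((2 * k : ℕ) - m : ℝ) * π / k = 2 * π - m * π / k by
      push_cast; field_simp, cos_two_pi_sub]
  rw [integral_sign_sin_mul_arccos_div_eq_sum hu hk]
  exact (sum_range_neg_one_pow_mul_sub_of_reflect
    (G := fun m : ℕ => log ((z + z⁻¹) / 2 - cos (m * π / k))) hreflect).trans
    (sum_log_sub_cos_odd_sub_even hz hk)

lemma exists_one_lt_add_inv_div_two_eq {u : ℝ} (hu : 1 < u) : ∃ z, 1 < z ∧ (z + z⁻¹) / 2 = u := by
  have hs : 0 < √(u ^ 2 - 1) := sqrt_pos.2 (by nlinarith)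
  have hs2 : √(u ^ 2 - 1) ^ 2 = u ^ 2 - 1 := sq_sqrt (by nlinarith)
  refine ⟨u + √(u ^ 2 - 1), by linarith, ?_⟩
  have hinv : (u + √(u ^ 2 - 1))⁻¹ = u - √(u ^ 2 - 1) :=
    inv_eq_of_mul_eq_one_right (by nlinarith)
  rw [hinv]
  ring

lemma one_sub_sqrt_div_one_add_sqrt {z : ℝ} (hz : 1 < z) :
    (1 - √(((z + z⁻¹) / 2 - 1) / ((z + z⁻¹) / 2 + 1))) /
      (1 + √(((z + z⁻¹) / 2 - 1) / ((z + z⁻¹) / 2 + 1))) = z⁻¹ := by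
  have hz0 : z ≠ 0 := by positivity
  have hsq : ((z + z⁻¹) / 2 - 1) / ((z + z⁻¹) / 2 + 1) = ((z - 1) / (z + 1)) ^ 2 := by
    field_simp
    ring
  have hnonneg : 0 ≤ (z - 1) / (z + 1) := div_nonneg (by linarith) (by linarith)
  rw [hsq, sqrt_sq hnonneg, div_eq_iff (by positivity)]
  field_simp
  ring

lemma inv_le_two_mul_log_add_one_div_sub_one {t : ℝ} (ht : 1 < t) :
    t⁻¹ ≤ 2 * log ((t + 1) / (t - 1)) := by
  have hlog : 1 - ((t + 1) / (t - 1))⁻¹ ≤ log ((t + 1) / (t - 1)) :=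
    one_sub_inv_le_log_of_pos (div_pos (by linarith) (by linarith))
  have hsub : 1 - ((t + 1) / (t - 1))⁻¹ = 2 / (t + 1) := by
    field_simp
    ring
  have hinv : t⁻¹ ≤ 2 * (2 / (t + 1)) := by
    rw [← mul_div_assoc, inv_eq_one_div, div_le_div_iff₀ (by linarith) (by linarith)]
    linarith
  linarith

theorem stmt_15 (u : ℝ) (hu : 1 < u) (k : ℕ) (hk : 1 ≤ k) :
    (∫ η in (-1 : ℝ)..1, Real.sign (Real.sin (k * Real.arccos η)) / (u - η)) ≥
      ((1 - Real.sqrt ((u - 1) / (u + 1))) /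
        (1 + Real.sqrt ((u - 1) / (u + 1)))) ^ k := by
  obtain ⟨z, hz, rfl⟩ := exists_one_lt_add_inv_div_two_eq hu
  rw [ge_iff_le, one_sub_sqrt_div_one_add_sqrt hz, integral_sign_sin_mul_arccos_div hz (by omega),
    inv_pow]
  exact inv_le_two_mul_log_add_one_div_sub_one (one_lt_pow₀ hz (by omega))
end

section
/- Let α ∈ (-1, 0) and let k be a positive integer. Define g_i(η) = η^{i + (1+α)/2} for i = 0, 1, …, k on [0,1]. Then the Gram matrices with respect to the L² inner product on [0,1] satisfy ⟨g_i, g_j⟩ = 1/(i + j + α + 2), and the best-approximation error det G(g_0, g_1, …, g_k)/det G(g_1, …, g_k) equals (α+2)·(∏_{j=1}^{k} j/(j+α+1))²·1/(k+α+2)². -/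
open Matrix Finset

/-!
The Gram entries are `∫₀¹ η ^ (i + j + α + 1) = 1 / (i + j + α + 2)`, so with `a = α + 2` the two
Gram matrices are the Cauchy matrices `H_a = (1 / (i + j + a))` of size `k + 1` and `H_{a + 2}` of
size `k`. Subtracting `a / (i + a)` times the first row of `H_a` from row `i` leaves the first
column `(1 / a, 0, …, 0)` and the lower block `D H_{a + 2} D` with `D = diag ((i + 1) / (i + 1 + a))`,
hence `det H_a = a⁻¹ (det D)² det H_{a + 2}`. The product `∏ (i + 1) / (i + 1 + a)` telescopes
against `∏ j / (j + a - 1)` to the factor `a / (k + a)`.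
-/

theorem intervalIntegral_rpow_mul_rpow {p q : ℝ} (hpq : -1 < p + q) :
    ∫ η in (0 : ℝ)..1, η ^ p * η ^ q = 1 / (p + q + 1) := by
  have hmul : ∀ η ∈ Set.uIoc (0 : ℝ) 1, η ^ p * η ^ q = η ^ (p + q) := fun η hη =>
    (Real.rpow_add (Set.uIoc_of_le (zero_le_one' ℝ) ▸ hη).1 p q).symm
  rw [intervalIntegral.integral_congr_ae (.of_forall hmul), integral_rpow (Or.inl hpq),
    Real.one_rpow, Real.zero_rpow (by linarith), sub_zero]

theorem prod_succ_div_succ_add (a : ℝ) (ha : 0 < a) (k : ℕ) :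
    ∏ i : Fin k, ((i : ℝ) + 1) / ((i : ℝ) + 1 + a) =
      a / (k + a) * ∏ j ∈ Icc 1 k, (j : ℝ) / (j + a - 1) := by
  induction k with
  | zero => simp [ha.ne']
  | succ k ih =>
    rw [Fin.prod_univ_castSucc, prod_Icc_succ_top (Nat.le_add_left 1 k)]
    simp only [Fin.val_castSucc, Fin.val_last]
    rw [ih]
    generalize ∏ j ∈ Icc 1 k, (j : ℝ) / (j + a - 1) = P
    have hk : (k : ℝ) + a ≠ 0 := by positivity
    have hk' : (k : ℝ) + 1 + a ≠ 0 := by positivity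
    push_cast
    rw [show (k : ℝ) + 1 + a - 1 = k + a by ring]
    field_simp

noncomputable def shiftedHilbert (a : ℝ) (n : ℕ) : Matrix (Fin n) (Fin n) ℝ :=
  of fun i j => 1 / ((i : ℝ) + j + a)

section ShiftedHilbert

variable {a : ℝ}

/-- `shiftedHilbert a (n + 1)` after subtracting `a / (i + a)` times row `0` from each row
`i ≠ 0`. -/
noncomputable def shiftedHilbertReduced (a : ℝ) (n : ℕ) : Matrix (Fin (n + 1)) (Fin (n + 1)) ℝ :=
  of fun i j => if i = 0 then 1 / ((j : ℝ) + a)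
    else (i : ℝ) * j / (((i : ℝ) + j + a) * ((i : ℝ) + a) * ((j : ℝ) + a))

theorem det_shiftedHilbert_eq_det_reduced (ha : 0 < a) (n : ℕ) :
    det (shiftedHilbert a (n + 1)) = det (shiftedHilbertReduced a n) := by
  refine det_eq_of_forall_row_eq_smul_add_const (fun i => if i = 0 then 0 else a / ((i : ℝ) + a))
    0 (if_pos rfl) fun i j => ?_
  have hi : (0 : ℝ) < i + a := by positivity
  have hj : (0 : ℝ) < j + a := by positivity
  have hij : (0 : ℝ) < i + j + a := by positivity
  by_cases h : i = 0
  · simp [shiftedHilbert, shiftedHilbertReduced, h]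
  · simp only [shiftedHilbert, shiftedHilbertReduced, of_apply, if_neg h, ↓reduceIte]
    field_simp
    ring

theorem submatrix_succ_shiftedHilbertReduced (ha : 0 < a) (n : ℕ) :
    (shiftedHilbertReduced a n).submatrix Fin.succ Fin.succ =
      diagonal (fun i : Fin n => ((i : ℝ) + 1) / ((i : ℝ) + 1 + a)) * shiftedHilbert (a + 2) n *
        diagonal (fun i : Fin n => ((i : ℝ) + 1) / ((i : ℝ) + 1 + a)) := by
  ext i j
  rw [mul_diagonal, diagonal_mul]
  have hi : (0 : ℝ) < i + 1 + a := by positivity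
  have hj : (0 : ℝ) < j + 1 + a := by positivity
  have hij : (0 : ℝ) < i + j + (a + 2) := by positivity
  simp only [shiftedHilbertReduced, shiftedHilbert, submatrix_apply, of_apply,
    if_neg (Fin.succ_ne_zero i), Fin.val_succ, Nat.cast_add, Nat.cast_one]
  field_simp
  ring

theorem det_shiftedHilbertReduced (ha : 0 < a) (n : ℕ) :
    det (shiftedHilbertReduced a n) =
      a⁻¹ * (∏ i : Fin n, ((i : ℝ) + 1) / ((i : ℝ) + 1 + a)) ^ 2 *
        det (shiftedHilbert (a + 2) n) := by
  have h00 : shiftedHilbertReduced a n 0 0 = a⁻¹ := by simp [shiftedHilbertReduced]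
  rw [det_succ_column_zero, sum_eq_single 0 (fun i _ hi => by simp [shiftedHilbertReduced, hi])
    (by simp), h00, Fin.succAbove_zero, submatrix_succ_shiftedHilbertReduced ha, det_mul,
    det_mul, det_diagonal, Fin.val_zero, pow_zero, one_mul]
  ring

theorem det_shiftedHilbert_succ (ha : 0 < a) (n : ℕ) :
    det (shiftedHilbert a (n + 1)) =
      a⁻¹ * (∏ i : Fin n, ((i : ℝ) + 1) / ((i : ℝ) + 1 + a)) ^ 2 *
        det (shiftedHilbert (a + 2) n) := by
  rw [det_shiftedHilbert_eq_det_reduced ha, det_shiftedHilbertReduced ha]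

theorem det_shiftedHilbert_ne_zero (ha : 0 < a) (n : ℕ) : det (shiftedHilbert a n) ≠ 0 := by
  induction n generalizing a with
  | zero => simp
  | succ n ih =>
    rw [det_shiftedHilbert_succ ha]
    refine mul_ne_zero (mul_ne_zero (inv_ne_zero ha.ne') (pow_ne_zero _ ?_)) (ih (by linarith))
    exact prod_ne_zero_iff.2 fun i _ => by positivity

end ShiftedHilbert

theorem stmt_17_general (α : ℝ) (hα : α ∈ Set.Ioo (-1 : ℝ) 0) (k : ℕ) :
    (∀ i j : Fin (k + 1),
        (∫ η in (0 : ℝ)..1,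
            η ^ ((i : ℝ) + (1 + α) / 2) * η ^ ((j : ℝ) + (1 + α) / 2)) =
          1 / ((i : ℝ) + (j : ℝ) + α + 2)) ∧
      (Matrix.det (Matrix.of fun i j : Fin (k + 1) => 1 / ((i : ℝ) + (j : ℝ) + α + 2))) /
          (Matrix.det (Matrix.of fun i j : Fin k =>
            1 / (((i : ℝ) + 1) + ((j : ℝ) + 1) + α + 2))) =
        (α + 2) * (∏ j ∈ Finset.Icc 1 k, (j : ℝ) / ((j : ℝ) + α + 1)) ^ 2 *
          (1 / ((k : ℝ) + α + 2) ^ 2) := by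
  have ha : 0 < α + 2 := by linarith [hα.1]
  refine ⟨fun i j => ?_, ?_⟩
  · have hij : (0 : ℝ) ≤ i + j := by positivity
    rw [intervalIntegral_rpow_mul_rpow (by linarith [hα.1])]
    congr 1
    ring
  · have hnum : (of fun i j : Fin (k + 1) => 1 / ((i : ℝ) + j + α + 2)) =
        shiftedHilbert (α + 2) (k + 1) := by
      ext i j; simp only [shiftedHilbert, of_apply]; ring_nf
    have hden : (of fun i j : Fin k => 1 / (((i : ℝ) + 1) + ((j : ℝ) + 1) + α + 2)) =
        shiftedHilbert (α + 2 + 2) k := by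
      ext i j; simp only [shiftedHilbert, of_apply]; ring_nf
    have hprod : ∏ j ∈ Icc 1 k, (j : ℝ) / (j + (α + 2) - 1) =
        ∏ j ∈ Icc 1 k, (j : ℝ) / (j + α + 1) :=
      prod_congr rfl fun j _ => by ring_nf
    rw [hnum, hden, det_shiftedHilbert_succ ha, mul_div_assoc,
      div_self (det_shiftedHilbert_ne_zero (by linarith) k), mul_one,
      prod_succ_div_succ_add _ ha, hprod]
    generalize ∏ j ∈ Icc 1 k, (j : ℝ) / (j + α + 1) = P
    have hk : (0 : ℝ) < k + α + 2 := by linarith [Nat.cast_nonneg (α := ℝ) k]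
    field_simp
    ring

theorem stmt_17 (α : ℝ) (hα : α ∈ Set.Ioo (-1 : ℝ) 0) (k : ℕ) (hk : 1 ≤ k) :
    (∀ i j : Fin (k + 1),
        (∫ η in (0 : ℝ)..1,
            η ^ ((i : ℝ) + (1 + α) / 2) * η ^ ((j : ℝ) + (1 + α) / 2)) =
          1 / ((i : ℝ) + (j : ℝ) + α + 2)) ∧
      (Matrix.det (Matrix.of fun i j : Fin (k + 1) => 1 / ((i : ℝ) + (j : ℝ) + α + 2))) /
          (Matrix.det (Matrix.of fun i j : Fin k =>
            1 / (((i : ℝ) + 1) + ((j : ℝ) + 1) + α + 2))) =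
        (α + 2) * (∏ j ∈ Finset.Icc 1 k, (j : ℝ) / ((j : ℝ) + α + 1)) ^ 2 *
          (1 / ((k : ℝ) + α + 2) ^ 2) :=
  stmt_17_general α hα k
end

section
/- Let α ∈ (-1, 0) and let k be a positive integer. Then for every polynomial s of degree at most k-1, ∫_0^1 η·(s(η)·η - 1)²·η^α dη ≥ 1/(e²·(k+2)^{2(α+1)+2}). -/
/-!
Put `γ = α + 2` and `p = s X - 1`, so the integral is `L (p²)` for the positive functional
`L r = ∫₀¹ r(x) x^(γ-1) dx`, and `p` ranges over the polynomials of degree `≤ k` with `p(0) = -1`.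
On that space `L` has an explicit reproducing polynomial `Q` at `0` (`L (r Q) = r(0)`): its
coefficients invert the Cauchy matrix `(1 / (γ + i + m))`, and checking this amounts to the
alternating binomial sums `∑ (-1)^m C(k,m) F(m) / (γ + i + m)`, i.e. `k`-th forward differences,
which kill polynomials of degree `< k` and send `1 / (γ + m)` to `k! / (γ)_(k+1)`.
Cauchy–Schwarz for `L` then gives `L (p²) ≥ p(0)² / Q(0) = 1 / Q(0)`, and
`Q(0) = γ ((γ + 1)_k / k!)² ≤ γ (k + 1)^(2γ)` by Bernoulli's inequality.
-/

open Finset Polynomial intervalIntegral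
open scoped Nat fwdDiff Interval

theorem sum_range_neg_one_pow_mul_choose_mul {M R : Type*} [AddCommMonoid M] [CommRing R]
    (f : M → R) (h y : M) (k : ℕ) :
    ∑ m ∈ range (k + 1), (-1) ^ m * k.choose m * f (y + m • h) = (-1) ^ k * Δ_[h] ^[k] f y := by
  rw [fwdDiff_iter_eq_sum_shift, mul_sum]
  refine sum_congr rfl fun m hm => ?_
  have hmk : m ≤ k := Nat.lt_succ_iff.mp (mem_range.mp hm)
  rw [zsmul_eq_mul]
  push_cast
  rw [← mul_assoc, ← mul_assoc, ← pow_add, show k + (k - m) = m + 2 * (k - m) by omega, pow_add,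
    pow_mul]
  simp

theorem fwdDiff_inv_ascPochhammer_eval {γ : ℝ} (hγ : 0 < γ) (r : ℕ) :
    Δ_[1] (fun n : ℕ => ((ascPochhammer ℝ r).eval (γ + n))⁻¹) =
      fun n : ℕ => -r * ((ascPochhammer ℝ (r + 1)).eval (γ + n))⁻¹ := by
  ext n
  have hpos : 0 < γ + n := by positivity
  have hP := ascPochhammer_pos (r + 1) (γ + n) hpos
  have hshift : ((ascPochhammer ℝ r).eval (γ + n + 1))⁻¹ =
      (γ + n) * ((ascPochhammer ℝ (r + 1)).eval (γ + n))⁻¹ := by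
    rw [ascPochhammer_succ_left]
    simp only [eval_mul, eval_X, eval_comp, eval_add, eval_one]
    field_simp
  have hlast : ((ascPochhammer ℝ r).eval (γ + n))⁻¹ =
      (γ + n + r) * ((ascPochhammer ℝ (r + 1)).eval (γ + n))⁻¹ := by
    rw [ascPochhammer_succ_eval]
    field_simp
  simp only [fwdDiff, Nat.cast_add, Nat.cast_one, ← add_assoc, hshift, hlast]
  ring

theorem fwdDiff_iter_inv_ascPochhammer_eval {γ : ℝ} (hγ : 0 < γ) (k r : ℕ) :
    Δ_[1] ^[k] (fun n : ℕ => ((ascPochhammer ℝ r).eval (γ + n))⁻¹) =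
      fun n : ℕ => (-1) ^ k * (ascPochhammer ℝ k).eval (r : ℝ) *
        ((ascPochhammer ℝ (r + k)).eval (γ + n))⁻¹ := by
  induction k generalizing r with
  | zero => simp
  | succ k ih =>
    have hsmul : (fun n : ℕ => -(r : ℝ) * ((ascPochhammer ℝ (r + 1)).eval (γ + n))⁻¹) =
        (-(r : ℝ)) • fun n : ℕ => ((ascPochhammer ℝ (r + 1)).eval (γ + n))⁻¹ := rfl
    rw [Function.iterate_succ_apply, fwdDiff_inv_ascPochhammer_eval hγ, hsmul,
      fwdDiff_iter_const_smul, ih]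
    ext n
    rw [ascPochhammer_succ_left, show r + 1 + k = r + (k + 1) by ring]
    simp only [Nat.cast_add, Nat.cast_one, Pi.smul_apply, smul_eq_mul, neg_mul, eval_mul, eval_X,
      eval_comp, eval_add, eval_one]
    ring

theorem sum_range_neg_one_pow_mul_choose_div {γ : ℝ} (hγ : 0 < γ) (k : ℕ) :
    ∑ m ∈ range (k + 1), (-1) ^ m * k.choose m / (γ + m) =
      k ! / (ascPochhammer ℝ (k + 1)).eval γ := by
  have := sum_range_neg_one_pow_mul_choose_mul
    (fun n : ℕ => ((ascPochhammer ℝ 1).eval (γ + n))⁻¹) 1 0 k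
  rw [fwdDiff_iter_inv_ascPochhammer_eval hγ] at this
  simp only [zero_add, smul_eq_mul, mul_one, ascPochhammer_one, eval_X, Nat.cast_one,
    ascPochhammer_eval_one, CharP.cast_eq_zero, add_zero] at this
  simp_rw [div_eq_mul_inv, this, add_comm 1 k, ← mul_assoc, ← pow_add, ← two_mul, pow_mul]
  simp

theorem sum_range_neg_one_pow_mul_choose_mul_eval_eq_zero {R : Type*} [CommRing R] {P : R[X]}
    {k : ℕ} (hP : P.degree < k) :
    ∑ m ∈ range (k + 1), (-1) ^ m * k.choose m * P.eval (m : R) = 0 := by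
  rcases eq_or_ne P 0 with rfl | hP0
  · simp
  have := sum_range_neg_one_pow_mul_choose_mul P.eval 1 0 k
  simp only [zero_add, nsmul_eq_mul, mul_one] at this
  rw [this, fwdDiff_iter_eq_zero_of_degree_lt ((natDegree_lt_iff_degree_lt hP0).mpr hP)]
  simp

theorem sum_range_neg_one_pow_mul_choose_mul_eval_div {γ : ℝ} (hγ : 0 < γ) {F : ℝ[X]} {k : ℕ}
    (hF : F.degree ≤ k) :
    ∑ m ∈ range (k + 1), (-1) ^ m * k.choose m * F.eval (m : ℝ) / (γ + m) =
      F.eval (-γ) * k ! / (ascPochhammer ℝ (k + 1)).eval γ := by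
  have hdeg : (F /ₘ (X - C (-γ))).degree < k := by
    rcases eq_or_ne F 0 with rfl | hF0
    · simp
    exact (degree_divByMonic_lt F _ hF0 (by simp)).trans_le hF
  have hsplit (x : ℝ) : F.eval x = (F /ₘ (X - C (-γ))).eval x * (x + γ) + F.eval (-γ) := by
    conv_lhs => rw [← modByMonic_add_div F (X - C (-γ)), modByMonic_X_sub_C_eq_C_eval]
    simp only [eval_add, eval_C, eval_mul, eval_sub, eval_X, sub_neg_eq_add]
    ring
  have hsummand (m : ℕ) : (-1) ^ m * k.choose m * F.eval (m : ℝ) / (γ + m) =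
      (-1) ^ m * k.choose m * (F /ₘ (X - C (-γ))).eval (m : ℝ) +
        F.eval (-γ) * ((-1) ^ m * k.choose m / (γ + m)) := by
    have : γ + m ≠ 0 := by positivity
    rw [hsplit]
    field_simp
    ring
  simp_rw [hsummand, sum_add_distrib, sum_range_neg_one_pow_mul_choose_mul_eval_eq_zero hdeg,
    ← mul_sum, sum_range_neg_one_pow_mul_choose_div hγ]
  ring

/-- `momentFunctional γ P = ∫₀¹ P(x) x^(γ-1) dx` for `0 < γ` (`integral_eval_mul_rpow`); defining it
through the moments `1 / (γ + n)` makes it linear by construction. -/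
noncomputable def momentFunctional (γ : ℝ) : ℝ[X] →ₗ[ℝ] ℝ :=
  lsum fun n => (γ + n)⁻¹ • LinearMap.id

theorem momentFunctional_monomial (γ : ℝ) (n : ℕ) (a : ℝ) :
    momentFunctional γ (monomial n a) = a / (γ + n) := by
  simp [momentFunctional, div_eq_inv_mul]

theorem intervalIntegrable_eval_mul_rpow {c : ℝ} (hc : -1 < c) (P : ℝ[X]) :
    IntervalIntegrable (fun x => P.eval x * x ^ c) MeasureTheory.volume 0 1 :=
  (intervalIntegrable_rpow' hc).continuousOn_mul P.continuous.continuousOn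

theorem integral_eval_mul_rpow {γ : ℝ} (hγ : 0 < γ) (P : ℝ[X]) :
    ∫ x in (0 : ℝ)..1, P.eval x * x ^ (γ - 1) = momentFunctional γ P := by
  have hc : -1 < γ - 1 := by linarith
  induction P using Polynomial.induction_on' with
  | add P Q hP hQ =>
    simp only [eval_add, add_mul, map_add]
    rw [integral_add (intervalIntegrable_eval_mul_rpow hc P)
      (intervalIntegrable_eval_mul_rpow hc Q), hP, hQ]
  | monomial n a =>
    have hpow : ∀ᵐ x, x ∈ Ι (0 : ℝ) 1 → (monomial n a).eval x * x ^ (γ - 1) =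
        a * x ^ (γ - 1 + n) := by
      refine Filter.Eventually.of_forall fun x hx => ?_
      rw [Set.uIoc_of_le zero_le_one] at hx
      rw [eval_monomial, Real.rpow_add hx.1, Real.rpow_natCast]
      ring
    rw [integral_congr_ae hpow, integral_const_mul,
      integral_rpow (Or.inl (by linarith)), momentFunctional_monomial,
      show γ - 1 + n + 1 = γ + n by ring, Real.zero_rpow (by positivity)]
    simp [div_eq_mul_inv]

theorem momentFunctional_mul_self_nonneg {γ : ℝ} (hγ : 0 < γ) (P : ℝ[X]) :
    0 ≤ momentFunctional γ (P * P) := by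
  rw [← integral_eval_mul_rpow hγ]
  refine integral_nonneg zero_le_one fun x hx => ?_
  rw [eval_mul]
  exact mul_nonneg (mul_self_nonneg _) (Real.rpow_nonneg hx.1 _)

theorem sq_coeff_zero_div_le_of_reproducing {L : ℝ[X] →ₗ[ℝ] ℝ} (hL : ∀ P, 0 ≤ L (P * P))
    {Q : ℝ[X]} {k : ℕ} (hQ : Q.natDegree ≤ k)
    (hrep : ∀ r : ℝ[X], r.natDegree ≤ k → L (r * Q) = r.coeff 0) {p : ℝ[X]}
    (hp : p.natDegree ≤ k) :
    p.coeff 0 ^ 2 / Q.coeff 0 ≤ L (p * p) := by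
  set a := p.coeff 0
  set b := Q.coeff 0
  have hQQ : L (Q * Q) = b := hrep Q hQ
  have hb : 0 ≤ b := hQQ ▸ hL Q
  rcases hb.eq_or_lt with hb0 | hbpos
  · rw [← hb0, div_zero]
    exact hL p
  have hexpand : (C b * p - C a * Q) * (C b * p - C a * Q) =
      b ^ 2 • (p * p) - (2 * a * b) • (p * Q) + a ^ 2 • (Q * Q) := by
    simp only [smul_eq_C_mul, C_mul, C_pow, C_ofNat]
    ring
  have := hL (C b * p - C a * Q)
  rw [hexpand, map_add, map_sub, map_smul, map_smul, map_smul, hrep p hp, hrep Q hQ] at this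
  rw [div_le_iff₀ hbpos]
  simp only [smul_eq_mul] at this
  nlinarith

noncomputable def reproducingPoly (γ : ℝ) (k : ℕ) : ℝ[X] :=
  ∑ m ∈ range (k + 1), monomial m ((ascPochhammer ℝ (k + 1)).eval γ / (k ! : ℝ) ^ 2 *
    ((-1) ^ m * k.choose m * (ascPochhammer ℝ k).eval (γ + 1 + m)))

theorem natDegree_reproducingPoly_le (γ : ℝ) (k : ℕ) : (reproducingPoly γ k).natDegree ≤ k :=
  natDegree_sum_le_of_forall_le _ _ fun _ hm =>
    (natDegree_monomial_le _).trans (Nat.lt_succ_iff.mp (mem_range.mp hm))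

theorem reproducingPoly_coeff_zero (γ : ℝ) (k : ℕ) :
    (reproducingPoly γ k).coeff 0 = γ * ((ascPochhammer ℝ k).eval (γ + 1) / k !) ^ 2 := by
  have hk : (k ! : ℝ) ≠ 0 := by positivity
  simp only [reproducingPoly, finsetSum_coeff, coeff_monomial, sum_ite_eq', mem_range,
    Nat.zero_lt_succ, if_true, pow_zero, Nat.choose_zero_right, Nat.cast_one, one_mul, mul_one,
    CharP.cast_eq_zero, add_zero, ascPochhammer_succ_left, eval_mul, eval_X, eval_comp, eval_add,
    eval_one]
  field_simp

theorem momentFunctional_X_pow_mul_reproducingPoly {γ : ℝ} (hγ : 0 < γ) {k i : ℕ} (hi : i ≤ k) :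
    momentFunctional γ (X ^ i * reproducingPoly γ k) = if i = 0 then 1 else 0 := by
  set F : ℝ[X] := (ascPochhammer ℝ k).comp (C (γ + 1) + X)
  have hF : F.degree ≤ k := by
    refine degree_le_of_natDegree_le ?_
    rw [natDegree_comp, ascPochhammer_natDegree, natDegree_C_add, natDegree_X, mul_one]
  have hsum := sum_range_neg_one_pow_mul_choose_mul_eval_div (by positivity : 0 < γ + i) hF
  simp only [F, eval_comp, eval_add, eval_C, eval_X] at hsum
  simp only [reproducingPoly, mul_sum, X_pow_mul_monomial, map_sum, momentFunctional_monomial]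
  have hshift (x : ℕ) : γ + ((x + i : ℕ) : ℝ) = γ + i + x := by push_cast; ring
  simp_rw [hshift, mul_div_assoc ((ascPochhammer ℝ (k + 1)).eval γ / (k ! : ℝ) ^ 2)]
  rw [← mul_sum, hsum]
  rcases Nat.eq_zero_or_pos i with rfl | hi0
  · have hA := ascPochhammer_pos (k + 1) γ hγ
    rw [if_pos rfl, Nat.cast_zero, add_zero, show γ + 1 + -γ = 1 by ring, ascPochhammer_eval_one]
    field_simp
  · have hroot : γ + 1 + -(γ + i) = -((i - 1 : ℕ) : ℝ) := by
      rw [Nat.cast_sub hi0]; ring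
    rw [hroot, ascPochhammer_eval_neg_coe_nat_of_lt (by omega), if_neg hi0.ne']
    simp

theorem reproducingPoly_coeff_zero_pos {γ : ℝ} (hγ : 0 < γ) (k : ℕ) :
    0 < (reproducingPoly γ k).coeff 0 := by
  rw [reproducingPoly_coeff_zero]
  have := ascPochhammer_pos k (γ + 1) (by linarith)
  positivity

theorem momentFunctional_mul_reproducingPoly {γ : ℝ} (hγ : 0 < γ) {k : ℕ} {r : ℝ[X]}
    (hr : r.natDegree ≤ k) : momentFunctional γ (r * reproducingPoly γ k) = r.coeff 0 := by
  conv_lhs => rw [r.as_sum_range' (k + 1) (Nat.lt_succ_of_le hr)]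
  simp only [← smul_X_eq_monomial, sum_mul, smul_mul_assoc, map_sum, map_smul, smul_eq_mul]
  rw [sum_eq_single_of_mem 0 (mem_range.mpr k.succ_pos) fun i hi hi0 => by
      rw [momentFunctional_X_pow_mul_reproducingPoly hγ (mem_range_succ_iff.mp hi), if_neg hi0,
        mul_zero],
    momentFunctional_X_pow_mul_reproducingPoly hγ k.zero_le, if_pos rfl, mul_one]

theorem ascPochhammer_eval_add_one_div_factorial_le {γ : ℝ} (hγ : 1 ≤ γ) (k : ℕ) :
    (ascPochhammer ℝ k).eval (γ + 1) / k ! ≤ ((k : ℝ) + 1) ^ γ := by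
  induction k with
  | zero => simp
  | succ k ih =>
    have hk : (0 : ℝ) < k + 1 := by positivity
    have hbernoulli : (γ + 1 + k) / (k + 1) ≤ ((k + 1 + 1 : ℝ) / (k + 1)) ^ γ := by
      have hs : (-1 : ℝ) ≤ 1 / (k + 1) := (by norm_num : (-1 : ℝ) ≤ 0).trans (by positivity)
      rw [show (γ + 1 + k) / (k + 1) = 1 + γ * (1 / (k + 1)) by field_simp; ring,
        show (k + 1 + 1 : ℝ) / (k + 1) = 1 + 1 / (k + 1) by field_simp]
      exact one_add_mul_self_le_rpow_one_add hs hγ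
    calc (ascPochhammer ℝ (k + 1)).eval (γ + 1) / (k + 1)!
        = (ascPochhammer ℝ k).eval (γ + 1) / k ! * ((γ + 1 + k) / (k + 1)) := by
          rw [ascPochhammer_succ_eval, Nat.factorial_succ]
          push_cast
          field_simp
      _ ≤ ((k : ℝ) + 1) ^ γ * (((k + 1 + 1 : ℝ) / (k + 1)) ^ γ) := by
          gcongr
      _ = ((k + 1 : ℕ) + 1 : ℝ) ^ γ := by
          rw [← Real.mul_rpow hk.le (by positivity)]
          push_cast
          field_simp

theorem reproducingPoly_coeff_zero_le {γ : ℝ} (hγ : 1 ≤ γ) (k : ℕ) :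
    (reproducingPoly γ k).coeff 0 ≤ γ * ((k : ℝ) + 1) ^ (2 * γ) := by
  rw [reproducingPoly_coeff_zero, mul_comm 2 γ, Real.rpow_mul (by positivity), Real.rpow_two]
  gcongr
  · exact div_nonneg (ascPochhammer_pos k _ (by linarith)).le (by positivity)
  · exact ascPochhammer_eval_add_one_div_factorial_le hγ k

theorem natDegree_mul_X_sub_one_le {R : Type*} [Ring R] [Nontrivial R] {s : R[X]} {k : ℕ}
    (hs : s.degree < k) : (s * X - 1).natDegree ≤ k := by
  refine natDegree_le_of_degree_le ((degree_sub_le _ _).trans (max_le ?_ ?_))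
  · rw [degree_mul_X]
    exact Nat.WithBot.add_one_le_of_lt hs
  · exact degree_one_le.trans (by exact_mod_cast k.zero_le)

theorem stmt_18_general (α : ℝ) (hα : α ∈ Set.Ioo (-1 : ℝ) 0) (k : ℕ)
    (s : Polynomial ℝ) (hs : s.degree < k) :
    (∫ η in (0 : ℝ)..1, η * (s.eval η * η - 1) ^ 2 * η ^ α) ≥
      1 / (Real.exp 1 ^ 2 * ((k : ℝ) + 2) ^ (2 * (α + 1) + 2)) := by
  obtain ⟨hα₁, hα₂⟩ := hα
  set γ := α + 2
  have hγ₁ : 1 ≤ γ := by linarith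
  have hγ₀ : 0 < γ := by linarith
  have hintegral : (∫ η in (0 : ℝ)..1, η * (s.eval η * η - 1) ^ 2 * η ^ α) =
      momentFunctional γ ((s * X - 1) * (s * X - 1)) := by
    rw [← integral_eval_mul_rpow hγ₀]
    refine integral_congr_ae (Filter.Eventually.of_forall fun x hx => ?_)
    rw [Set.uIoc_of_le zero_le_one] at hx
    rw [show γ - 1 = 1 + α by ring, Real.rpow_add hx.1, Real.rpow_one]
    simp only [eval_mul, eval_sub, eval_X, eval_one]
    ring
  have hcs :
      1 / (reproducingPoly γ k).coeff 0 ≤ momentFunctional γ ((s * X - 1) * (s * X - 1)) := by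
    simpa using sq_coeff_zero_div_le_of_reproducing (momentFunctional_mul_self_nonneg hγ₀)
      (natDegree_reproducingPoly_le γ k) (fun _ => momentFunctional_mul_reproducingPoly hγ₀)
      (natDegree_mul_X_sub_one_le hs)
  have he : (2 : ℝ) ≤ Real.exp 1 := by linarith [Real.add_one_le_exp (1 : ℝ)]
  have hQ : (reproducingPoly γ k).coeff 0 ≤ Real.exp 1 ^ 2 * ((k : ℝ) + 2) ^ (2 * γ) :=
    calc (reproducingPoly γ k).coeff 0 ≤ γ * ((k : ℝ) + 1) ^ (2 * γ) :=
          reproducingPoly_coeff_zero_le hγ₁ k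
      _ ≤ Real.exp 1 ^ 2 * ((k : ℝ) + 2) ^ (2 * γ) := by
        gcongr
        · nlinarith
        · norm_num
  rw [ge_iff_le, hintegral, show 2 * (α + 1) + 2 = 2 * γ by ring]
  exact (one_div_le_one_div_of_le (reproducingPoly_coeff_zero_pos hγ₀ k) hQ).trans hcs

theorem stmt_18 (α : ℝ) (hα : α ∈ Set.Ioo (-1 : ℝ) 0) (k : ℕ) (hk : 1 ≤ k)
    (s : Polynomial ℝ) (hs : s.degree < k) :
    (∫ η in (0 : ℝ)..1, η * (s.eval η * η - 1) ^ 2 * η ^ α) ≥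
      1 / (Real.exp 1 ^ 2 * ((k : ℝ) + 2) ^ (2 * (α + 1) + 2)) :=
  stmt_18_general α hα k s hs
end
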